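/- arXiv:2510.22845 — 8 statements merged into one kernel-verified Lean document; each statement's English description precedes it below -/
import Mathlib

section
/- Let k ≥ 1 and let π be a permutation of [k] with π(1) = 1. Let n, d ≥ 1, let S ⊆ [n]^d with (1,…,1) ∉ S, and let f : [n]^d → ℝ be such that the restriction of f to [n]^d ∖ S is π-free. Define f* : [n]^d → ℝ by f*(x) = f(x) for x ∉ S, and f*(x) = min{ f(p) : p ∉ S, p ≼ x } for x ∈ S (the minimum is over a nonempty set since (1,…,1) ∉ S and (1,…,1) ≼ x). Then f* is π-free. -/
/-- The coordinatewise (grid) partial order on `[n]^d`, modeled as `Fin d → Fin n`. -/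
def gridLE {n d : ℕ} (x y : Fin d → Fin n) : Prop := ∀ i, x i ≤ y i

/-- Strict grid order: `x ≺ y` iff `x ≼ y` and `x ≠ y`. -/
def gridLT {n d : ℕ} (x y : Fin d → Fin n) : Prop := gridLE x y ∧ x ≠ y

/-- `x : Fin k → [n]^d` is a `π`-appearance of `f`: a chain `x 0 ≺ x 1 ≺ ⋯ ≺ x (k-1)`
whose `f`-values are ordered exactly as `π` orders `[k]`. -/
def IsPiAppearance {n d k : ℕ} (f : (Fin d → Fin n) → ℝ) (π : Equiv.Perm (Fin k))
    (x : Fin k → Fin d → Fin n) : Prop :=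
  (∀ i j : Fin k, i < j → gridLT (x i) (x j)) ∧
  (∀ i j : Fin k, f (x i) < f (x j) ↔ π i < π j)

/-- `f` restricted to `A` has no `π`-appearance. -/
def PiFreeOn {n d k : ℕ} (f : (Fin d → Fin n) → ℝ) (π : Equiv.Perm (Fin k))
    (A : Set (Fin d → Fin n)) : Prop :=
  ¬ ∃ x : Fin k → Fin d → Fin n, IsPiAppearance f π x ∧ ∀ i, x i ∈ A

/-- `f` is `π`-free. -/
def PiFree {n d k : ℕ} (f : (Fin d → Fin n) → ℝ) (π : Equiv.Perm (Fin k)) : Prop :=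
  PiFreeOn f π Set.univ

/-- The deletion distance of `f` from `π`-freeness: the minimum cardinality of a set `S`
of indices such that `f` restricted to the complement of `S` is `π`-free. -/
noncomputable def patternDeletionDist {n d k : ℕ} (f : (Fin d → Fin n) → ℝ)
    (π : Equiv.Perm (Fin k)) : ℕ :=
  sInf {s : ℕ | ∃ S : Set (Fin d → Fin n), S.ncard = s ∧ PiFreeOn f π Sᶜ}

/-- The Hamming distance of `f` from `π`-freeness: the minimum number of points where `f`
must be changed to obtain a `π`-free function. -/
noncomputable def patternHammingDist {n d k : ℕ} (f : (Fin d → Fin n) → ℝ)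
    (π : Equiv.Perm (Fin k)) : ℕ :=
  sInf {s : ℕ | ∃ g : (Fin d → Fin n) → ℝ, PiFree g π ∧ {x | f x ≠ g x}.ncard = s}

/-!
Since `π` fixes the first position, a `π`-appearance `x` of `f*` has its strict `f*`-minimum at
`x 0`. Pick `p ∉ S` with `p ≼ x 0` and `f p = f* (x 0)`. No later `x i` can lie in `S`, for then
`f* (x i) ≤ f p = f* (x 0)`. Replacing `x 0` by `p` therefore gives a `π`-appearance of `f`
inside the complement of `S`.
-/

theorem Fin.mk_zero_le {k : ℕ} (hk : 0 < k) (i : Fin k) : (⟨0, hk⟩ : Fin k) ≤ i :=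
  Nat.zero_le _

section Grid

variable {n d : ℕ}

theorem gridLE_iff_le {x y : Fin d → Fin n} : gridLE x y ↔ x ≤ y := Iff.rfl

theorem gridLT_iff_lt {x y : Fin d → Fin n} : gridLT x y ↔ x < y :=
  (lt_iff_le_and_ne (a := x) (b := y)).symm

end Grid

namespace IsPiAppearance

variable {n d k : ℕ} {π : Equiv.Perm (Fin k)} {f g : (Fin d → Fin n) → ℝ}
  {x : Fin k → Fin d → Fin n}

theorem apply_first_lt (hk : 0 < k) (hx : IsPiAppearance f π x) (hπ : π ⟨0, hk⟩ = ⟨0, hk⟩)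
    {i : Fin k} (hi : i ≠ ⟨0, hk⟩) : f (x ⟨0, hk⟩) < f (x i) := by
  have hπi : π i ≠ ⟨0, hk⟩ := fun h => hi (π.injective (h.trans hπ.symm))
  rw [hx.2, hπ]
  exact (Fin.mk_zero_le hk _).lt_of_ne hπi.symm

theorem update_first (hk : 0 < k) (hx : IsPiAppearance g π x) {p : Fin d → Fin n}
    (hp : gridLE p (x ⟨0, hk⟩))
    (hval : ∀ i, f (Function.update x ⟨0, hk⟩ p i) = g (x i)) :
    IsPiAppearance f π (Function.update x ⟨0, hk⟩ p) := by
  refine ⟨fun i j hij => ?_, fun i j => by rw [hval, hval, hx.2]⟩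
  have hj : j ≠ ⟨0, hk⟩ := ((Fin.mk_zero_le hk i).trans_lt hij).ne'
  rw [Function.update_of_ne hj]
  rcases eq_or_ne i ⟨0, hk⟩ with rfl | hi
  · rw [Function.update_self, gridLT_iff_lt]
    exact (gridLE_iff_le.1 hp).trans_lt (gridLT_iff_lt.1 (hx.1 _ j hij))
  · rw [Function.update_of_ne hi]
    exact hx.1 i j hij

end IsPiAppearance

theorem exists_notMem_gridLE_apply_eq {n d : ℕ} {S : Set (Fin d → Fin n)}
    {f fstar : (Fin d → Fin n) → ℝ} (hfs1 : ∀ x ∉ S, fstar x = f x)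
    (hfs2 : ∀ x ∈ S, IsLeast {y : ℝ | ∃ p ∉ S, gridLE p x ∧ f p = y} (fstar x))
    (x : Fin d → Fin n) : ∃ p ∉ S, gridLE p x ∧ f p = fstar x := by
  by_cases hx : x ∈ S
  · exact (hfs2 x hx).1
  · exact ⟨x, hx, le_refl x, (hfs1 x hx).symm⟩

theorem stmt3_general (k n d : ℕ) (hk : 1 ≤ k)
    (π : Equiv.Perm (Fin k)) (hπ : π ⟨0, hk⟩ = ⟨0, hk⟩)
    (S : Set (Fin d → Fin n))
    (f : (Fin d → Fin n) → ℝ)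
    (hf : PiFreeOn f π Sᶜ)
    (fstar : (Fin d → Fin n) → ℝ)
    (hfs1 : ∀ x ∉ S, fstar x = f x)
    (hfs2 : ∀ x ∈ S, IsLeast {y : ℝ | ∃ p ∉ S, gridLE p x ∧ f p = y} (fstar x)) :
    PiFree fstar π := by
  rintro ⟨x, hx, -⟩
  set i₀ : Fin k := ⟨0, hk⟩
  obtain ⟨p, hpS, hpx, hfp⟩ := exists_notMem_gridLE_apply_eq hfs1 hfs2 (x i₀)
  have hxS : ∀ i ≠ i₀, x i ∉ S := fun i hi hiS => by
    have hpxi : gridLE p (x i) :=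
      (gridLE_iff_le.1 hpx).trans (gridLT_iff_lt.1 (hx.1 i₀ i ((Fin.mk_zero_le hk i).lt_of_ne hi.symm))).le
    have hle : fstar (x i) ≤ f p := (hfs2 _ hiS).2 ⟨p, hpS, hpxi, rfl⟩
    exact (hx.apply_first_lt hk hπ hi).not_ge (hfp ▸ hle)
  have hval : ∀ i, f (Function.update x i₀ p i) = fstar (x i) := fun i => by
    rcases eq_or_ne i i₀ with rfl | hi
    · rw [Function.update_self, hfp]
    · rw [Function.update_of_ne hi, hfs1 _ (hxS i hi)]
  refine hf ⟨_, hx.update_first hk hpx hval, fun i => ?_⟩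
  rcases eq_or_ne i i₀ with rfl | hi
  · rw [Function.update_self]; exact hpS
  · rw [Function.update_of_ne hi]; exact hxS i hi

/-- Let `π` be a permutation of `[k]` with `π(1) = 1`, let `S ⊆ [n]^d`
not contain `(1,…,1)`, and suppose `f` restricted to the complement of `S` is `π`-free.
Define `f*` to agree with `f` off `S` and, on `S`, to take the value
`min { f(p) : p ∉ S, p ≼ x }` (formalized via `IsLeast`). Then `f*` is `π`-free. -/
theorem stmt3 (k n d : ℕ) (hk : 1 ≤ k) (hn : 1 ≤ n) (hd : 1 ≤ d)
    (π : Equiv.Perm (Fin k)) (hπ : π ⟨0, hk⟩ = ⟨0, hk⟩)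
    (S : Set (Fin d → Fin n))
    (hS : (fun _ => (⟨0, hn⟩ : Fin n)) ∉ S)
    (f : (Fin d → Fin n) → ℝ)
    (hf : PiFreeOn f π Sᶜ)
    (fstar : (Fin d → Fin n) → ℝ)
    (hfs1 : ∀ x ∉ S, fstar x = f x)
    (hfs2 : ∀ x ∈ S, IsLeast {y : ℝ | ∃ p ∉ S, gridLE p x ∧ f p = y} (fstar x)) :
    PiFree fstar π :=
  stmt3_general k n d hk π hπ S f hf fstar hfs1 hfs2
end

section
/- For every integer k ≥ 1 there exists a constant C > 0 with the following property: for every nonempty finite set N, every nonempty family M of pairwise disjoint k-element subsets of N, and every integer s with s ≥ C·|N| / |M|^{1/k}, if x_1,…,x_s are sampled independently and uniformly at random from N (i.e., under the uniform product measure on N^s), then with probability at least 1/2 there exists a member m ∈ M with m ⊆ {x_1,…,x_s}. -/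
open Finset

attribute [local instance 10] Classical.propDecidable
set_option maxHeartbeats 1000000

noncomputable def blockEquiv {κ ρ ι N : Type} (e : ρ × ι ↪ κ) (P : ρ → (ι → N) → Prop) :
    {x : κ → N // ∀ r, P r (fun j => x (e (r, j)))} ≃
      ((∀ r, {y : ι → N // P r y}) × ({i : κ // i ∉ Set.range e} → N)) where
  toFun x := ⟨fun r => ⟨fun j => x.1 (e (r, j)), x.2 r⟩, fun i => x.1 i.1⟩
  invFun fg := ⟨fun i =>
    if h : i ∈ Set.range e then
      (fg.1 ((Equiv.ofInjective e e.injective).symm ⟨i, h⟩).1).1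
        ((Equiv.ofInjective e e.injective).symm ⟨i, h⟩).2
    else fg.2 ⟨i, h⟩, by
      intro r
      have key : ∀ j, (if h : e (r, j) ∈ Set.range e then
          (fg.1 ((Equiv.ofInjective e e.injective).symm ⟨e (r, j), h⟩).1).1
            ((Equiv.ofInjective e e.injective).symm ⟨e (r, j), h⟩).2
        else fg.2 ⟨e (r, j), h⟩) = (fg.1 r).1 j := by
        intro j
        rw [dif_pos (Set.mem_range_self (r, j))]
        have h2 := Equiv.ofInjective_symm_apply e.injective (r, j)
        simp only [h2]
        try rw [h2]
      have : (fun j => (if h : e (r, j) ∈ Set.range e then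
          (fg.1 ((Equiv.ofInjective e e.injective).symm ⟨e (r, j), h⟩).1).1
            ((Equiv.ofInjective e e.injective).symm ⟨e (r, j), h⟩).2
        else fg.2 ⟨e (r, j), h⟩)) = (fg.1 r).1 := funext key
      rw [this]
      exact (fg.1 r).2⟩
  left_inv := by
    intro x
    apply Subtype.ext
    funext i
    by_cases h : i ∈ Set.range e
    · simp only [dif_pos h]
      obtain ⟨p, hp⟩ := h
      have h2 : e (((Equiv.ofInjective e e.injective).symm ⟨i, ⟨p, hp⟩⟩).1,
          ((Equiv.ofInjective e e.injective).symm ⟨i, ⟨p, hp⟩⟩).2) = i := by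
        have := (Equiv.ofInjective e e.injective).apply_symm_apply ⟨i, ⟨p, hp⟩⟩
        have h3 := congrArg Subtype.val this
        simpa [Equiv.ofInjective] using h3
      rw [h2]
    · simp only [dif_neg h]
  right_inv := by
    intro fg
    ext r j
    · simp only
      rw [dif_pos (Set.mem_range_self (r, j))]
      have h2 := Equiv.ofInjective_symm_apply e.injective (r, j)
      simp only [h2]
      try rw [h2]
    · simp only
      rw [dif_neg r.2]

lemma card_blocks {κ ρ ι N : Type} [Fintype κ] [Fintype ρ] [Fintype ι] [Fintype N]
    (e : ρ × ι ↪ κ) (P : ρ → (ι → N) → Prop) :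
    Nat.card {x : κ → N | ∀ r, P r (fun j => x (e (r, j)))}
      = (∏ r, Nat.card {y : ι → N | P r y}) *
          Fintype.card N ^ (Fintype.card κ - Fintype.card ρ * Fintype.card ι) := by
  have h0 : Nat.card {x : κ → N | ∀ r, P r (fun j => x (e (r, j)))}
      = Nat.card ((∀ r, {y : ι → N // P r y}) × ({i : κ // i ∉ Set.range e} → N)) :=
    Nat.card_congr (blockEquiv e P)
  have h1 : Nat.card {i : κ // i ∉ Set.range e}
      = Fintype.card κ - Fintype.card ρ * Fintype.card ι := by
    rw [Nat.card_eq_fintype_card, Fintype.card_subtype_compl]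
    congr 1
    rw [← Fintype.card_prod]
    exact Fintype.card_congr (Equiv.ofInjective e e.injective).symm
  have h2 : Nat.card N = Fintype.card N := Nat.card_eq_fintype_card
  rw [h0, Nat.card_prod, Nat.card_pi, Nat.card_fun, h1, h2]
  rfl

lemma card_hit {ι N : Type} [Fintype ι] [Fintype N] (a : N) :
    Nat.card {y : ι → N | ∃ j, y j = a}
      = Fintype.card N ^ Fintype.card ι - (Fintype.card N - 1) ^ Fintype.card ι := by
  have hsub : Nat.card {b : N // b ≠ a} = Fintype.card N - 1 := by
    rw [Nat.card_eq_fintype_card]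
    have := Fintype.card_subtype_compl (fun b : N => b = a) (α := N)
    rw [this, Fintype.card_subtype_eq]
  have hc : Nat.card {y : ι → N | ¬∃ j, y j = a} = (Fintype.card N - 1) ^ Fintype.card ι := by
    have e1 : {y : ι → N // ¬∃ j, y j = a} ≃ {y : ι → N // ∀ j, y j ≠ a} :=
      Equiv.subtypeEquivRight (fun y => by push_neg; rfl)
    have e2 : {y : ι → N // ∀ j, y j ≠ a} ≃ (∀ _ : ι, {b : N // b ≠ a}) :=
      Equiv.subtypePiEquivPi (p := fun (_ : ι) (b : N) => b ≠ a)
    have : Nat.card {y : ι → N | ¬∃ j, y j = a} = Nat.card (∀ _ : ι, {b : N // b ≠ a}) :=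
      Nat.card_congr (e1.trans e2)
    rw [this, Nat.card_fun, hsub, Nat.card_eq_fintype_card]
  have htot : Nat.card {y : ι → N | ∃ j, y j = a} + Nat.card {y : ι → N | ¬∃ j, y j = a}
      = Fintype.card N ^ Fintype.card ι := by
    have h1 : ({y : ι → N | ∃ j, y j = a}ᶜ : Set (ι → N)) = {y : ι → N | ¬∃ j, y j = a} := rfl
    rw [Nat.card_coe_set_eq, Nat.card_coe_set_eq, ← h1,
      Set.ncard_add_ncard_compl, Nat.card_fun, Nat.card_eq_fintype_card, Nat.card_eq_fintype_card]
  rw [hc] at htot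
  exact Nat.eq_sub_of_add_eq htot

lemma biUnion_cons_eq {α β : Type} (a : α) (s : Finset α) (ha : a ∉ s) (C : α → Set β) :
    (⋃ x ∈ Finset.cons a s ha, C x) = C a ∪ ⋃ x ∈ s, C x := by
  ext y
  simp only [Set.mem_iUnion, Finset.mem_cons, Set.mem_union, exists_prop]
  constructor
  · rintro ⟨x, rfl | hx, hy⟩
    · exact Or.inl hy
    · exact Or.inr ⟨x, hx, hy⟩
  · rintro (hy | ⟨x, hx, hy⟩)
    · exact ⟨a, Or.inl rfl, hy⟩
    · exact ⟨x, Or.inr hx, hy⟩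

lemma ncard_biUnion_le' {α β : Type} [Fintype β] (s : Finset α) (C : α → Set β) :
    (⋃ a ∈ s, C a).ncard ≤ ∑ a ∈ s, (C a).ncard := by
  classical
  induction s using Finset.cons_induction with
  | empty => simp
  | cons a s ha ih =>
    rw [biUnion_cons_eq, Finset.sum_cons]
    exact le_trans (Set.ncard_union_le _ _) (by omega)

lemma bonferroni {α β : Type} [DecidableEq α] [Fintype β] (s : Finset α) (C : α → Set β) :
    (∑ a ∈ s, ((C a).ncard : ℤ)) - ∑ a ∈ s, ∑ b ∈ s \ {a}, ((C a ∩ C b).ncard : ℤ)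
      ≤ ((⋃ a ∈ s, C a).ncard : ℤ) := by
  classical
  induction s using Finset.cons_induction with
  | empty => simp
  | cons a s ha ih =>
    rw [biUnion_cons_eq, Finset.sum_cons, Finset.sum_cons]
    have hunion : ((C a ∪ ⋃ x ∈ s, C x).ncard : ℤ)
        = (C a).ncard + ((⋃ x ∈ s, C x).ncard : ℤ) - ((C a ∩ ⋃ x ∈ s, C x).ncard : ℤ) := by
      have := Set.ncard_inter_add_ncard_union (C a) (⋃ x ∈ s, C x) (Set.toFinite _) (Set.toFinite _)
      omega
    have hinter : ((C a ∩ ⋃ x ∈ s, C x).ncard : ℤ) ≤ ∑ b ∈ s, ((C a ∩ C b).ncard : ℤ) := by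
      have h1 : C a ∩ ⋃ x ∈ s, C x = ⋃ x ∈ s, (C a ∩ C x) := by
        rw [Set.inter_iUnion₂]
      rw [h1]
      calc ((⋃ x ∈ s, (C a ∩ C x)).ncard : ℤ) ≤ ((∑ x ∈ s, (C a ∩ C x).ncard : ℕ) : ℤ) := by
            exact_mod_cast ncard_biUnion_le' s _
        _ = ∑ b ∈ s, ((C a ∩ C b).ncard : ℤ) := by push_cast; rfl
    -- rewrite the pair sums over (cons a s)
    have hsd : (Finset.cons a s ha) \ {a} = s := by
      ext x
      simp only [Finset.mem_sdiff, Finset.mem_cons, Finset.mem_singleton]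
      constructor
      · rintro ⟨rfl | h1, h2⟩
        · exact absurd rfl h2
        · exact h1
      · intro h; exact ⟨Or.inr h, fun hxa => ha (hxa ▸ h)⟩
    have hsd2 : ∀ x ∈ s, (Finset.cons a s ha) \ {x} = Finset.cons a (s \ {x}) (by simp [ha]) := by
      intro x hx
      ext y
      simp only [Finset.mem_sdiff, Finset.mem_cons, Finset.mem_singleton]
      constructor
      · rintro ⟨h1 | h1, h2⟩
        · exact Or.inl h1
        · exact Or.inr ⟨h1, h2⟩
      · rintro (rfl | ⟨h1, h2⟩)
        · exact ⟨Or.inl rfl, fun hax => ha (hax ▸ hx)⟩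
        · exact ⟨Or.inr h1, h2⟩
    rw [hsd]
    have hrw : ∑ x ∈ s, ∑ b ∈ (Finset.cons a s ha) \ {x}, ((C x ∩ C b).ncard : ℤ)
        = ∑ x ∈ s, (((C x ∩ C a).ncard : ℤ) + ∑ b ∈ s \ {x}, ((C x ∩ C b).ncard : ℤ)) := by
      apply Finset.sum_congr rfl
      intro x hx
      rw [hsd2 x hx, Finset.sum_cons]
    rw [hrw]
    have hnn : (0:ℤ) ≤ ∑ x ∈ s, ((C x ∩ C a).ncard : ℤ) :=
      Finset.sum_nonneg (fun x _ => Int.ofNat_nonneg _)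
    rw [Finset.sum_add_distrib]
    calc ((C a).ncard : ℤ) + ∑ x ∈ s, ((C x).ncard : ℤ) -
          (∑ b ∈ s, ((C a ∩ C b).ncard : ℤ) +
            (∑ x ∈ s, ((C x ∩ C a).ncard : ℤ) + ∑ x ∈ s, ∑ b ∈ s \ {x}, ((C x ∩ C b).ncard : ℤ)))
        ≤ ((C a).ncard : ℤ) + ∑ x ∈ s, ((C x).ncard : ℤ) -
          (∑ b ∈ s, ((C a ∩ C b).ncard : ℤ) + ∑ x ∈ s, ∑ b ∈ s \ {x}, ((C x ∩ C b).ncard : ℤ)) := by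
          omega
      _ ≤ ((C a).ncard : ℤ) + ((⋃ x ∈ s, C x).ncard : ℤ) - ∑ b ∈ s, ((C a ∩ C b).ncard : ℤ) := by
          omega
      _ ≤ ((C a ∪ ⋃ x ∈ s, C x).ncard : ℤ) := by omega

lemma card_forced_le {ι N : Type} [Fintype ι] [Fintype N] {c : ℕ} (a : Fin c → N)
    (ha : Function.Injective a) (φ : Fin c → ι) :
    Nat.card {y : ι → N | ∀ r, y (φ r) = a r} ≤ Fintype.card N ^ (Fintype.card ι - c) := by
  by_cases hφ : Function.Injective φ
  · set e : Fin c × Unit ↪ ι :=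
      ⟨fun p => φ p.1, fun p q h => by
        have := hφ h
        exact Prod.ext this (Subsingleton.elim _ _)⟩ with he
    have key := card_blocks e (fun r (g : Unit → N) => g Unit.unit = a r)
    have hset : {x : ι → N | ∀ r, (fun j : Unit => x (e (r, j))) Unit.unit = a r}
        = {y : ι → N | ∀ r, y (φ r) = a r} := rfl
    rw [hset] at key
    rw [key]
    have hone : ∀ r : Fin c, Nat.card {g : Unit → N | g Unit.unit = a r} = 1 := by
      intro r
      have e2 : {g : Unit → N // g Unit.unit = a r} ≃ {b : N // b = a r} :=
        Equiv.subtypeEquiv (Equiv.funUnique Unit N) (fun g => Iff.rfl)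
      exact (Nat.card_congr e2).trans
        (by rw [Nat.card_eq_fintype_card, Fintype.card_subtype_eq])
    calc (∏ r, Nat.card {g : Unit → N | g Unit.unit = a r}) *
          Fintype.card N ^ (Fintype.card ι - Fintype.card (Fin c) * Fintype.card Unit)
        = Fintype.card N ^ (Fintype.card ι - c) := by
          rw [Finset.prod_congr rfl (fun r _ => hone r)]
          simp
      _ ≤ Fintype.card N ^ (Fintype.card ι - c) := le_refl _
  · have : {y : ι → N | ∀ r, y (φ r) = a r} = ∅ := by
      rw [Set.eq_empty_iff_forall_notMem]
      intro y hy
      rw [Function.not_injective_iff] at hφ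
      obtain ⟨r, r', heq, hne⟩ := hφ
      exact hne (ha (by rw [← hy r, ← hy r', heq]))
    rw [this]
    simp

lemma card_allhit_le {ι N : Type} [Fintype ι] [Fintype N] {c : ℕ} (a : Fin c → N)
    (ha : Function.Injective a) :
    Nat.card {y : ι → N | ∀ r, ∃ j, y j = a r}
      ≤ Fintype.card ι ^ c * Fintype.card N ^ (Fintype.card ι - c) := by
  have hsub : {y : ι → N | ∀ r, ∃ j, y j = a r}
      ⊆ ⋃ φ ∈ (Finset.univ : Finset (Fin c → ι)), {y : ι → N | ∀ r, y (φ r) = a r} := by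
    intro y hy
    simp only [Set.mem_iUnion, Finset.mem_univ, exists_prop]
    refine ⟨fun r => (hy r).choose, trivial, fun r => (hy r).choose_spec⟩
  calc Nat.card {y : ι → N | ∀ r, ∃ j, y j = a r}
      = Set.ncard {y : ι → N | ∀ r, ∃ j, y j = a r} := Nat.card_coe_set_eq _
    _ ≤ Set.ncard (⋃ φ ∈ (Finset.univ : Finset (Fin c → ι)), {y : ι → N | ∀ r, y (φ r) = a r}) :=
        Set.ncard_le_ncard hsub (Set.toFinite _)
    _ ≤ ∑ φ ∈ (Finset.univ : Finset (Fin c → ι)), ({y : ι → N | ∀ r, y (φ r) = a r}).ncard :=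
        ncard_biUnion_le' _ _
    _ ≤ ∑ _φ ∈ (Finset.univ : Finset (Fin c → ι)), Fintype.card N ^ (Fintype.card ι - c) := by
        refine Finset.sum_le_sum (fun φ _ => ?_)
        rw [← Nat.card_coe_set_eq]
        exact card_forced_le a ha φ
    _ = Fintype.card ι ^ c * Fintype.card N ^ (Fintype.card ι - c) := by
        rw [Finset.sum_const, Finset.card_univ, smul_eq_mul]
        congr 1
        rw [Fintype.card_fun]
        simp

lemma pow_frac_le {n ℓ : ℕ} (hn : 1 ≤ n) (hℓ : 1 ≤ ℓ) :
    (((n : ℝ) - 1) / n) ^ ℓ ≤ (n : ℝ) / (n + ℓ) := by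
  have hn0 : (0:ℝ) < n := by exact_mod_cast hn
  rcases Nat.lt_or_ge n 2 with h2 | h2
  · interval_cases n
    · have h1 : ((1:ℝ) - 1) / 1 = 0 := by norm_num
      simp only [Nat.cast_one, h1]
      rw [zero_pow (by omega)]
      positivity
  · have hn1 : (1:ℝ) < n := by exact_mod_cast h2
    have hd : (0:ℝ) < (n:ℝ) - 1 := by linarith
    have key : (1 + (ℓ:ℝ) / n) ≤ ((n:ℝ) / (n - 1)) ^ ℓ := by
      have h1 : ((n:ℝ) / (n - 1)) = 1 + 1 / ((n:ℝ) - 1) := by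
        field_simp
        ring
      rw [h1]
      calc (1:ℝ) + (ℓ:ℝ) / n ≤ 1 + (ℓ:ℝ) * (1 / ((n:ℝ) - 1)) := by
            have : (ℓ:ℝ) / n ≤ (ℓ:ℝ) / ((n:ℝ) - 1) := by
              apply div_le_div_of_nonneg_left (by positivity) hd (by linarith)
            rw [mul_one_div]; linarith
        _ ≤ (1 + 1 / ((n:ℝ) - 1)) ^ ℓ :=
            one_add_mul_le_pow
              (le_trans (by norm_num : (-2:ℝ) ≤ 0) (by positivity : (0:ℝ) ≤ 1/((n:ℝ)-1))) ℓ
    have hpos : (0:ℝ) < 1 + (ℓ:ℝ)/n := by positivity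
    have hfrac : (((n : ℝ) - 1) / n) ^ ℓ = (((n:ℝ) / (n-1)) ^ ℓ)⁻¹ := by
      rw [← inv_pow]
      congr 1
      rw [inv_div]
    rw [hfrac]
    have h3 : (n:ℝ) / (n + ℓ) = (1 + (ℓ:ℝ)/n)⁻¹ := by
      rw [eq_comm, inv_eq_iff_eq_inv, eq_comm, inv_div]
      field_simp
    rw [h3]
    apply inv_anti₀ hpos key

lemma pow_one_sub_le_half {δ : ℝ} (h0 : 0 ≤ δ) (h1 : δ ≤ 1) {R : ℕ} (hR : 1 ≤ δ * R) :
    (1 - δ) ^ R ≤ 1 / 2 := by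
  have h2 : (1 - δ) ≤ Real.exp (-δ) := by
    have := Real.add_one_le_exp (-δ)
    linarith
  calc (1 - δ) ^ R ≤ Real.exp (-δ) ^ R := by
        apply pow_le_pow_left₀ (by linarith) h2
    _ = Real.exp (-(δ * R)) := by
        rw [← Real.exp_nat_mul]; ring_nf
    _ ≤ Real.exp (-1) := by
        apply Real.exp_le_exp.mpr; linarith
    _ ≤ 1 / 2 := by
      rw [Real.exp_neg]
      rw [inv_le_comm₀ (Real.exp_pos 1) (by norm_num)]
      have := Real.add_one_le_exp 1
      linarith

lemma cover_lb {N : Type} [Fintype N] {k ℓ : ℕ} (m : Finset N) (hm : m.card = k) :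
    (Fintype.card N ^ ℓ - (Fintype.card N - 1) ^ ℓ) ^ k
      ≤ Nat.card {y : Fin k × Fin ℓ → N | ∀ a ∈ m, ∃ i, y i = a} := by
  classical
  set n := Fintype.card N
  obtain em := m.equivFinOfCardEq hm
  set a : Fin k → N := fun r => (em.symm r).1 with ha
  have hsurj : ∀ b ∈ m, ∃ r, a r = b := by
    intro b hb
    exact ⟨em ⟨b, hb⟩, by simp [ha]⟩
  have hsub : {y : Fin k × Fin ℓ → N | ∀ r, ∃ j : Fin ℓ, y (r, j) = a r}
      ⊆ {y : Fin k × Fin ℓ → N | ∀ b ∈ m, ∃ i, y i = b} := by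
    intro y hy b hb
    obtain ⟨r, hr⟩ := hsurj b hb
    obtain ⟨j, hj⟩ := hy r
    exact ⟨(r, j), by rw [hj, hr]⟩
  have hkey := card_blocks (Function.Embedding.refl (Fin k × Fin ℓ))
    (fun (r : Fin k) (g : Fin ℓ → N) => ∃ j, g j = a r)
  have hset : {x : Fin k × Fin ℓ → N |
      ∀ r, ∃ j, x (Function.Embedding.refl (Fin k × Fin ℓ) (r, j)) = a r}
      = {y : Fin k × Fin ℓ → N | ∀ r, ∃ j : Fin ℓ, y (r, j) = a r} := rfl
  rw [hset] at hkey
  have hprod : ∀ r : Fin k, Nat.card {g : Fin ℓ → N | ∃ j, g j = a r}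
      = n ^ ℓ - (n - 1) ^ ℓ := by
    intro r
    rw [card_hit (a r)]
    simp [n]
  have hcardprod : Fintype.card (Fin k × Fin ℓ) = k * ℓ := by simp
  calc (n ^ ℓ - (n - 1) ^ ℓ) ^ k
      = (∏ _r : Fin k, (n ^ ℓ - (n - 1) ^ ℓ)) * n ^ 0 := by
        rw [Finset.prod_const, Finset.card_univ, Fintype.card_fin, pow_zero, mul_one]
    _ = Nat.card {y : Fin k × Fin ℓ → N | ∀ r, ∃ j : Fin ℓ, y (r, j) = a r} := by
        rw [hkey]
        congr 1
        · exact Finset.prod_congr rfl (fun r _ => (hprod r).symm)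
        · congr 1
          simp [hcardprod]
    _ ≤ Nat.card {y : Fin k × Fin ℓ → N | ∀ b ∈ m, ∃ i, y i = b} := by
        rw [Nat.card_coe_set_eq, Nat.card_coe_set_eq]
        exact Set.ncard_le_ncard hsub (Set.toFinite _)

lemma pair_ub {N : Type} [Fintype N] {k ℓ : ℕ} (m m' : Finset N)
    (hm : m.card = k) (hm' : m'.card = k) (hd : Disjoint m m') :
    ({y : Fin k × Fin ℓ → N | ∀ a ∈ m, ∃ i, y i = a}
        ∩ {y : Fin k × Fin ℓ → N | ∀ a ∈ m', ∃ i, y i = a}).ncard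
      ≤ (k * ℓ) ^ (2 * k) * Fintype.card N ^ (k * ℓ - 2 * k) := by
  classical
  have hcu : (m ∪ m').card = 2 * k := by
    rw [Finset.card_union_of_disjoint hd, hm, hm']; ring
  obtain em := (m ∪ m').equivFinOfCardEq hcu
  set a : Fin (2 * k) → N := fun r => (em.symm r).1 with ha
  have hainj : Function.Injective a := by
    intro r r' hrr
    have := Subtype.ext hrr
    exact em.symm.injective this
  have hsub : ({y : Fin k × Fin ℓ → N | ∀ b ∈ m, ∃ i, y i = b}
      ∩ {y : Fin k × Fin ℓ → N | ∀ b ∈ m', ∃ i, y i = b})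
      ⊆ {y : Fin k × Fin ℓ → N | ∀ r, ∃ j, y j = a r} := by
    rintro y ⟨h1, h2⟩ r
    have hmem := (em.symm r).2
    rcases Finset.mem_union.mp hmem with h | h
    · exact h1 _ h
    · exact h2 _ h
  calc ({y : Fin k × Fin ℓ → N | ∀ b ∈ m, ∃ i, y i = b}
        ∩ {y : Fin k × Fin ℓ → N | ∀ b ∈ m', ∃ i, y i = b}).ncard
      ≤ Nat.card {y : Fin k × Fin ℓ → N | ∀ r, ∃ j, y j = a r} := by
        rw [Nat.card_coe_set_eq]
        exact Set.ncard_le_ncard hsub (Set.toFinite _)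
    _ ≤ Fintype.card (Fin k × Fin ℓ) ^ (2 * k)
          * Fintype.card N ^ (Fintype.card (Fin k × Fin ℓ) - 2 * k) := card_allhit_le a hainj
    _ = (k * ℓ) ^ (2 * k) * Fintype.card N ^ (k * ℓ - 2 * k) := by simp


lemma union_lb {N : Type} [Fintype N] {k ℓ : ℕ} (M' : Finset (Finset N))
    (hcard : ∀ m ∈ M', m.card = k)
    (hdisj : ∀ m ∈ M', ∀ m' ∈ M', m ≠ m' → Disjoint m m') :
    (M'.card : ℝ) * (((Fintype.card N ^ ℓ - (Fintype.card N - 1) ^ ℓ : ℕ)) : ℝ) ^ k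
      - (M'.card : ℝ) ^ 2 * (((k * ℓ) ^ (2 * k) * Fintype.card N ^ (k * ℓ - 2 * k) : ℕ) : ℝ)
      ≤ ((⋃ m ∈ M', {y : Fin k × Fin ℓ → N | ∀ a ∈ m, ∃ i, y i = a}).ncard : ℝ) := by
  classical
  set q : ℕ := Fintype.card N ^ ℓ - (Fintype.card N - 1) ^ ℓ with hq
  set PB : ℕ := (k * ℓ) ^ (2 * k) * Fintype.card N ^ (k * ℓ - 2 * k) with hPB
  set Cov : Finset N → Set (Fin k × Fin ℓ → N) :=
    fun m => {y : Fin k × Fin ℓ → N | ∀ a ∈ m, ∃ i, y i = a} with hCov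
  have hb := bonferroni M' Cov
  have hbR : (∑ a ∈ M', (((Cov a).ncard : ℝ))) - ∑ a ∈ M', ∑ b ∈ M' \ {a}, (((Cov a ∩ Cov b).ncard : ℝ))
      ≤ (((⋃ a ∈ M', Cov a).ncard : ℝ)) := by
    exact_mod_cast hb
  have hsum1 : (M'.card : ℝ) * (q : ℝ) ^ k ≤ ∑ a ∈ M', (((Cov a).ncard : ℝ)) := by
    calc (M'.card : ℝ) * (q : ℝ) ^ k = ∑ _a ∈ M', ((q ^ k : ℕ) : ℝ) := by
          rw [Finset.sum_const, nsmul_eq_mul]; push_cast; ring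
      _ ≤ ∑ a ∈ M', (((Cov a).ncard : ℝ)) := by
          apply Finset.sum_le_sum
          intro m hm
          have h1 := cover_lb (ℓ := ℓ) m (hcard m hm)
          rw [Nat.card_coe_set_eq] at h1
          exact_mod_cast h1
  have hsum2 : ∑ a ∈ M', ∑ b ∈ M' \ {a}, (((Cov a ∩ Cov b).ncard : ℝ))
      ≤ (M'.card : ℝ) ^ 2 * (PB : ℝ) := by
    calc ∑ a ∈ M', ∑ b ∈ M' \ {a}, (((Cov a ∩ Cov b).ncard : ℝ))
        ≤ ∑ _a ∈ M', ∑ _b ∈ M' \ {_a}, (PB : ℝ) := by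
          apply Finset.sum_le_sum
          intro m hm
          apply Finset.sum_le_sum
          intro m' hm'
          rw [Finset.mem_sdiff, Finset.mem_singleton] at hm'
          have h2 := pair_ub (ℓ := ℓ) m m' (hcard m hm) (hcard m' hm'.1)
            (hdisj m hm m' hm'.1 (Ne.symm hm'.2) )
          exact_mod_cast h2
      _ ≤ ∑ _a ∈ M', (M'.card : ℝ) * (PB : ℝ) := by
          apply Finset.sum_le_sum
          intro m hm
          rw [Finset.sum_const, nsmul_eq_mul]
          apply mul_le_mul_of_nonneg_right _ (by positivity)
          exact_mod_cast Finset.card_le_card (Finset.sdiff_subset)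
      _ = (M'.card : ℝ) ^ 2 * (PB : ℝ) := by
          rw [Finset.sum_const, nsmul_eq_mul]; ring
  have hgoal : (⋃ m ∈ M', {y : Fin k × Fin ℓ → N | ∀ a ∈ m, ∃ i, y i = a}) = ⋃ a ∈ M', Cov a := rfl
  rw [hgoal]
  linarith


lemma final_step {N : Type} [Fintype N] {k : ℕ}
    (M M' : Finset (Finset N)) (hsub : M' ⊆ M)
    {s ℓ R : ℕ} (hRkℓ : R * (k * ℓ) ≤ s) {δ : ℝ} (hδ0 : 0 ≤ δ) (hδ1 : δ ≤ 1)
    (hδR : 1 ≤ δ * R)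
    (hU : δ * (Fintype.card N : ℝ) ^ (k * ℓ)
      ≤ ((⋃ m ∈ M', {y : Fin k × Fin ℓ → N | ∀ a ∈ m, ∃ i, y i = a}).ncard : ℝ)) :
    (1 / 2 : ℝ) * (Fintype.card N : ℝ) ^ s ≤
      (Set.ncard {x : Fin s → N | ∃ m ∈ M, ∀ a ∈ m, ∃ i, x i = a} : ℝ) := by
  classical
  set n := Fintype.card N with hn
  set Un : Set (Fin k × Fin ℓ → N) :=
    ⋃ m ∈ M', {y : Fin k × Fin ℓ → N | ∀ a ∈ m, ∃ i, y i = a} with hUn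
  set S : Set (Fin s → N) := {x : Fin s → N | ∃ m ∈ M, ∀ a ∈ m, ∃ i, x i = a} with hS
  -- the embedding
  set E : Fin R × (Fin k × Fin ℓ) ↪ Fin s :=
    (((Equiv.prodCongr (Equiv.refl (Fin R)) finProdFinEquiv).trans
        finProdFinEquiv).toEmbedding).trans (Fin.castLEEmb hRkℓ) with hE
  have hone_sub : (1 - δ) ^ R * (n:ℝ) ^ s ≤ (1/2) * (n:ℝ) ^ s :=
    mul_le_mul_of_nonneg_right (pow_one_sub_le_half hδ0 hδ1 hδR) (by positivity)
  -- failure set inclusion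
  have hfail : Sᶜ ⊆ {x : Fin s → N | ∀ r : Fin R, (fun b => x (E (r, b))) ∈ Unᶜ} := by
    intro x hx r
    intro hmem
    simp only [hUn, Set.mem_iUnion, exists_prop] at hmem
    obtain ⟨m, hmM', hcov⟩ := hmem
    apply hx
    exact ⟨m, hsub hmM', fun a ha => by
      obtain ⟨i, hi⟩ := hcov a ha
      exact ⟨E (r, i), hi⟩⟩
  -- count the structured superset
  have hkey := card_blocks E (fun (_ : Fin R) (g : Fin k × Fin ℓ → N) => g ∈ Unᶜ)
  have hcards : Fintype.card (Fin s) - Fintype.card (Fin R) * Fintype.card (Fin k × Fin ℓ)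
      = s - R * (k * ℓ) := by simp [Fintype.card_prod]
  -- complement cardinality
  have htot : Un.ncard + Unᶜ.ncard = n ^ (k * ℓ) := by
    rw [Set.ncard_add_ncard_compl Un]
    rw [Nat.card_fun, Nat.card_eq_fintype_card, Nat.card_eq_fintype_card]
    simp [hn]
  have hU_le : Un.ncard ≤ n ^ (k * ℓ) := htot ▸ Nat.le_add_right _ _
  have hcompl_le : ((Unᶜ.ncard : ℝ)) ≤ (1 - δ) * (n:ℝ) ^ (k * ℓ) := by
    have h1 : ((Unᶜ.ncard : ℝ)) = (n:ℝ) ^ (k*ℓ) - Un.ncard := by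
      have h2 := congrArg (Nat.cast : ℕ → ℝ) htot
      push_cast at h2
      linarith
    rw [h1]
    have := hU
    linarith
  -- bound on failure count
  have hfailcount : ((Sᶜ.ncard : ℝ)) ≤ (1 - δ)^R * (n:ℝ) ^ s := by
    have h1 : Sᶜ.ncard ≤ Nat.card {x : Fin s → N | ∀ r : Fin R, (fun b => x (E (r, b))) ∈ Unᶜ} := by
      rw [Nat.card_coe_set_eq]
      exact Set.ncard_le_ncard hfail (Set.toFinite _)
    have h2 : Nat.card {x : Fin s → N | ∀ r : Fin R, (fun b => x (E (r, b))) ∈ Unᶜ}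
        = Unᶜ.ncard ^ R * n ^ (s - R * (k * ℓ)) := by
      rw [hkey, hcards]
      congr 1
      rw [← Nat.card_coe_set_eq]
      rw [Finset.prod_const, Finset.card_univ, Fintype.card_fin]
      rfl
    have h3 : ((Sᶜ.ncard : ℝ)) ≤ (Unᶜ.ncard : ℝ) ^ R * (n:ℝ) ^ (s - R * (k * ℓ)) := by
      calc ((Sᶜ.ncard : ℝ)) ≤ ((Nat.card {x : Fin s → N | ∀ r : Fin R,
            (fun b => x (E (r, b))) ∈ Unᶜ} : ℕ) : ℝ) := by exact_mod_cast h1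
        _ = (Unᶜ.ncard : ℝ) ^ R * (n:ℝ) ^ (s - R * (k * ℓ)) := by
            rw [h2]; push_cast; ring
    calc ((Sᶜ.ncard : ℝ)) ≤ (Unᶜ.ncard : ℝ) ^ R * (n:ℝ) ^ (s - R * (k * ℓ)) := h3
      _ ≤ ((1 - δ) * (n:ℝ) ^ (k * ℓ)) ^ R * (n:ℝ) ^ (s - R * (k * ℓ)) := by
          apply mul_le_mul_of_nonneg_right _ (by positivity)
          exact pow_le_pow_left₀ (by positivity) hcompl_le R
      _ = (1 - δ)^R * ((n:ℝ) ^ (k * ℓ * R) * (n:ℝ) ^ (s - R * (k * ℓ))) := by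
          rw [mul_pow, ← pow_mul]; ring
      _ = (1 - δ)^R * (n:ℝ) ^ s := by
          have harith : k * ℓ * R + (s - R * (k * ℓ)) = s := by
            rw [show k * ℓ * R = R * (k * ℓ) from by ring]
            exact Nat.add_sub_cancel' hRkℓ
          rw [← pow_add, harith]
  -- conclude
  have hS_card : (S.ncard : ℝ) = (n:ℝ) ^ s - (Sᶜ.ncard : ℝ) := by
    have := Set.ncard_add_ncard_compl S (Set.toFinite _) (Set.toFinite _)
    rw [Nat.card_fun, Nat.card_eq_fintype_card, Nat.card_eq_fintype_card] at this
    simp only [Fintype.card_fin] at this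
    have h2 := congrArg (Nat.cast : ℕ → ℝ) this
    push_cast at h2
    rw [hn]
    linarith
  rw [hS]  at hS_card
  rw [hS_card]
  have := le_trans hfailcount hone_sub
  linarith


/-- For every `k ≥ 1` there is `C > 0` such that: for every nonempty
finite set `N`, every nonempty family `M` of pairwise disjoint `k`-element subsets of
`N`, and every `s ≥ C·|N| / |M|^{1/k}`, a uniform independent sample of `s` points from
`N` contains some member of `M` with probability at least `1/2` (probability modeled by
counting tuples in `N^s`). -/
theorem stmt6 (k : ℕ) (hk : 1 ≤ k) :
    ∃ C : ℝ, 0 < C ∧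
      ∀ (N : Type) [Fintype N], Nonempty N →
        ∀ M : Finset (Finset N), M.Nonempty →
          (∀ m ∈ M, m.card = k) →
          (∀ m ∈ M, ∀ m' ∈ M, m ≠ m' → Disjoint m m') →
          ∀ s : ℕ, C * (Fintype.card N : ℝ) / (M.card : ℝ) ^ ((1 : ℝ) / (k : ℝ)) ≤ (s : ℝ) →
            (1 / 2 : ℝ) * (Fintype.card N : ℝ) ^ s ≤
              (Set.ncard {x : Fin s → N | ∃ m ∈ M, ∀ a ∈ m, ∃ i, x i = a} : ℝ) := by
  classical
  set K : ℕ := (4 * k) ^ (2 * k) with hK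
  set R : ℕ := 16 * K with hR
  have hK1 : 1 ≤ K := Nat.one_le_pow _ _ (by omega)
  have hR1 : 1 ≤ R := by omega
  have hCpos : 0 < 4 * R * k := by
    have := Nat.mul_pos (Nat.mul_pos (by norm_num : 0 < 4) hR1) hk
    exact this
  refine ⟨((4 * R * k : ℕ) : ℝ), by exact_mod_cast hCpos, ?_⟩
  intro N _inst hN M hM hcard hdisj s hs
  set n := Fintype.card N with hn
  have hn1 : 1 ≤ n := Fintype.card_pos
  have hn0R : (0:ℝ) < n := by exact_mod_cast hn1
  set t := M.card with ht
  have ht1 : 1 ≤ t := Finset.card_pos.mpr hM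
  have ht0R : (0:ℝ) < t := by exact_mod_cast ht1
  -- t * k ≤ n
  have hkt : t * k ≤ n := by
    have hdisjU : ∀ m ∈ M, ∀ m' ∈ M, m ≠ m' → Disjoint (id m) (id m') := by
      intro m hm m' hm' hne; exact hdisj m hm m' hm' hne
    have h1 : (M.biUnion id).card = ∑ m ∈ M, m.card := Finset.card_biUnion hdisjU
    have h2 : ∑ m ∈ M, m.card = t * k := by
      rw [Finset.sum_congr rfl hcard, Finset.sum_const, smul_eq_mul]
    have h3 : (M.biUnion id).card ≤ n := Finset.card_le_univ _
    omega
  have htn : t ≤ n := by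
    have h1 : t * 1 ≤ t * k := Nat.mul_le_mul_left t hk
    rw [mul_one] at h1
    exact le_trans h1 hkt
  
  -- rpow facts
  have hrpos : (0:ℝ) < (t:ℝ) ^ ((1:ℝ)/(k:ℝ)) := Real.rpow_pos_of_pos ht0R _
  have hrle : (t:ℝ) ^ ((1:ℝ)/(k:ℝ)) ≤ (n:ℝ) := by
    calc (t:ℝ) ^ ((1:ℝ)/(k:ℝ)) ≤ (t:ℝ) ^ (1:ℝ) := by
          apply Real.rpow_le_rpow_of_exponent_le (by exact_mod_cast ht1)
          rw [div_le_one (by exact_mod_cast hk : (0:ℝ) < (k:ℝ))]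
          exact_mod_cast hk
      _ = (t:ℝ) := Real.rpow_one _
      _ ≤ (n:ℝ) := by exact_mod_cast htn
  have hsC : ((4 * R * k : ℕ) : ℝ) ≤ s := by
    calc ((4*R*k:ℕ):ℝ) = ((4*R*k:ℕ):ℝ) * n / n := by field_simp
      _ ≤ ((4*R*k:ℕ):ℝ) * n / ((t:ℝ) ^ ((1:ℝ)/(k:ℝ))) := by
          apply div_le_div_of_nonneg_left (by positivity) hrpos hrle
      _ ≤ s := hs
  have hs4 : 4 * R * k ≤ s := by exact_mod_cast hsC
  have hs0 : 0 < s := lt_of_lt_of_le hCpos hs4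
  have hs0R : (0:ℝ) < s := by exact_mod_cast hs0
  set ℓ := s / (R * k) with hℓdef
  have hRk1 : 0 < R * k := Nat.mul_pos hR1 hk
  have hℓ2 : 2 ≤ ℓ := by
    rw [hℓdef, Nat.le_div_iff_mul_le hRk1]
    calc 2 * (R * k) ≤ 4 * (R * k) := Nat.mul_le_mul_right _ (by norm_num)
      _ = 4 * R * k := by ring
      _ ≤ s := hs4
  have hℓ1 : 1 ≤ ℓ := le_trans (by norm_num) hℓ2
  have hRkℓ : R * (k * ℓ) ≤ s := by
    calc R * (k * ℓ) = ℓ * (R * k) := by ring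
      _ = s / (R * k) * (R * k) := by rw [hℓdef]
      _ ≤ s := Nat.div_mul_le_self s (R * k)
  have hsℓ : s ≤ 2 * ((R * k) * ℓ) := by
    have hmod := Nat.div_add_mod s (R * k)
    have hmlt : s % (R * k) < R * k := Nat.mod_lt _ hRk1
    have h1 : (R * k) ≤ (R * k) * ℓ := Nat.le_mul_of_pos_right _ (by omega)
    calc s = (R * k) * ℓ + s % (R * k) := by rw [hℓdef] at *; omega
      _ ≤ (R * k) * ℓ + (R * k) := by omega
      _ ≤ (R * k) * ℓ + (R * k) * ℓ := by omega
      _ = 2 * ((R * k) * ℓ) := by ring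
  have hsℓR : (s:ℝ) ≤ 2 * ((R:ℝ) * k) * ℓ := by
    have h1 : ((s:ℕ):ℝ) ≤ ((2 * ((R * k) * ℓ) : ℕ) : ℝ) := by exact_mod_cast hsℓ
    push_cast at h1
    linarith
  -- q, β, p
  set q : ℕ := n ^ ℓ - (n - 1) ^ ℓ with hqdef
  have hqle : (n - 1) ^ ℓ ≤ n ^ ℓ := Nat.pow_le_pow_left (Nat.sub_le n 1) ℓ
  have hn1cast : ((n - 1 : ℕ) : ℝ) = (n:ℝ) - 1 := by
    have := Nat.cast_sub (R := ℝ) hn1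
    rw [this]; norm_num
  have hq_cast : (q:ℝ) = (n:ℝ)^ℓ - ((n:ℝ) - 1)^ℓ := by
    rw [hqdef, Nat.cast_sub hqle]
    push_cast [hn1cast]
    ring
  set β : ℝ := (q:ℝ) / (n:ℝ)^ℓ with hβdef
  have hβ_eq : β = 1 - (((n:ℝ) - 1)/(n:ℝ))^ℓ := by
    rw [hβdef, hq_cast, div_pow]
    field_simp
  have hβ_lb : (ℓ:ℝ)/((n:ℝ) + ℓ) ≤ β := by
    rw [hβ_eq]
    have h1 := pow_frac_le hn1 hℓ1
    have h2 : (n:ℝ)/((n:ℝ)+ℓ) + (ℓ:ℝ)/((n:ℝ)+ℓ) = 1 := by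
      field_simp
    linarith
  have hβ0 : 0 ≤ β := by positivity
  have hβ1 : β ≤ 1 := by
    rw [hβdef, div_le_one (by positivity)]
    calc (q:ℝ) ≤ ((n^ℓ : ℕ):ℝ) := by exact_mod_cast Nat.sub_le _ _
      _ = (n:ℝ)^ℓ := by push_cast; ring
  set p : ℝ := β ^ k with hpdef
  have hp0 : 0 ≤ p := by positivity
  have hqk_eq : ((q:ℝ))^k = p * (n:ℝ)^(k * ℓ) := by
    rw [hpdef, hβdef, div_pow, div_mul_eq_mul_div, mul_comm k ℓ, pow_mul]
    field_simp
  -- pair bound cast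
  have h2kkl : 2 * k ≤ k * ℓ := by
    calc 2 * k = k * 2 := by ring
      _ ≤ k * ℓ := Nat.mul_le_mul_left _ hℓ2
  have hPBR : (((k * ℓ) ^ (2 * k) * n ^ (k * ℓ - 2 * k) : ℕ):ℝ)
      = (((k:ℝ) * ℓ)/(n:ℝ))^(2*k) * (n:ℝ)^(k*ℓ) := by
    have hsplit : (n:ℝ)^(k*ℓ) = (n:ℝ)^(k*ℓ - 2*k) * (n:ℝ)^(2*k) := by
      rw [← pow_add, Nat.sub_add_cancel h2kkl]
    rw [div_pow, hsplit]
    push_cast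
    field_simp
  -- constants
  set δ : ℝ := 1 / (16 * (K:ℝ)) with hδdef
  have hK0R : (0:ℝ) < K := by exact_mod_cast hK1
  have hδ0 : 0 ≤ δ := by positivity
  have hδ1 : δ ≤ 1 := by
    rw [hδdef, div_le_one (by positivity)]
    have : (1:ℝ) ≤ (K:ℝ) := by exact_mod_cast hK1
    linarith
  have hδR : 1 ≤ δ * R := by
    have hReq : (R:ℝ) = 16*(K:ℝ) := by rw [hR]; push_cast; ring
    rw [hδdef, hReq, one_div, inv_mul_cancel₀ (by positivity : (0:ℝ) < 16*(K:ℝ)).ne']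
  have h2K : (2:ℝ)^k ≤ 16 * (K:ℝ) := by
    have h1 : (2:ℕ)^k ≤ (4*k)^k := Nat.pow_le_pow_left (by omega) k
    have h2 : (4*k)^k ≤ (4*k)^(2*k) := Nat.pow_le_pow_right (by omega) (by omega)
    have h3 : (2:ℕ)^k ≤ K := le_trans h1 h2
    calc (2:ℝ)^k ≤ (K:ℝ) := by exact_mod_cast h3
      _ ≤ 16 * (K:ℝ) := by linarith
  -- helper for singleton case
  have singleton_case : ∀ m₀ ∈ M, δ ≤ p →
      (1 / 2 : ℝ) * (n : ℝ) ^ s ≤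
        (Set.ncard {x : Fin s → N | ∃ m ∈ M, ∀ a ∈ m, ∃ i, x i = a} : ℝ) := by
    intro m₀ hm₀ hδp
    apply final_step M {m₀} (Finset.singleton_subset_iff.mpr hm₀) hRkℓ hδ0 hδ1 hδR
    have hsub1 : {y : Fin k × Fin ℓ → N | ∀ a ∈ m₀, ∃ i, y i = a}
        ⊆ ⋃ m ∈ ({m₀} : Finset (Finset N)), {y : Fin k × Fin ℓ → N | ∀ a ∈ m, ∃ i, y i = a} := by
      intro y hy
      simp only [Set.mem_iUnion, exists_prop]
      exact ⟨m₀, Finset.mem_singleton_self m₀, hy⟩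
    have hcov := cover_lb (ℓ := ℓ) m₀ (hcard m₀ hm₀)
    rw [Nat.card_coe_set_eq] at hcov
    have hcovR : ((q:ℝ))^k ≤ (({y : Fin k × Fin ℓ → N | ∀ a ∈ m₀, ∃ i, y i = a}).ncard : ℝ) := by
      rw [hqdef]
      exact_mod_cast hcov
    calc δ * (n:ℝ)^(k*ℓ) ≤ p * (n:ℝ)^(k*ℓ) := by
          apply mul_le_mul_of_nonneg_right hδp (by positivity)
      _ = ((q:ℝ))^k := hqk_eq.symm
      _ ≤ (({y : Fin k × Fin ℓ → N | ∀ a ∈ m₀, ∃ i, y i = a}).ncard : ℝ) := hcovR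
      _ ≤ _ := by
          exact_mod_cast Nat.cast_le.mpr (Set.ncard_le_ncard hsub1 (Set.toFinite _))
  obtain ⟨m₀, hm₀⟩ := hM
  by_cases hA : n ≤ ℓ
  · -- case A: plentiful samples
    have hβhalf : (1/2 : ℝ) ≤ β := by
      refine le_trans ?_ hβ_lb
      rw [le_div_iff₀ (by positivity)]
      have : (n:ℝ) ≤ ℓ := by exact_mod_cast hA
      linarith
    have hp_lb : (1/2 : ℝ)^k ≤ p := by
      rw [hpdef]
      exact pow_le_pow_left₀ (by norm_num) hβhalf k
    have hδp : δ ≤ p := by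
      refine le_trans ?_ hp_lb
      rw [hδdef, div_pow, one_pow]
      apply one_div_le_one_div_of_le (by positivity) h2K
    exact singleton_case m₀ hm₀ hδp
  · -- case B: ℓ < n
    push_neg at hA
    have hℓn : (ℓ:ℝ) < n := by exact_mod_cast hA
    have hℓ0R : (0:ℝ) < ℓ := by exact_mod_cast (by omega : 0 < ℓ)
    have hβ_lb2 : (ℓ:ℝ)/(2*(n:ℝ)) ≤ β := by
      refine le_trans ?_ hβ_lb
      apply div_le_div_of_nonneg_left (by positivity) (by positivity)
      linarith
    have hp_pos : 0 < p := by
      rw [hpdef]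
      apply pow_pos (lt_of_lt_of_le (by positivity) hβ_lb2)
    have hratio : (((k:ℝ) * ℓ)/(n:ℝ))^(2*k) ≤ (K:ℝ) * p^2 := by
      have hkl_eq : ((k:ℝ) * ℓ)/(n:ℝ) = (2*(k:ℝ)) * ((ℓ:ℝ)/(2*(n:ℝ))) := by
        field_simp
      have h2kK : ((2*(k:ℝ)))^(2*k) ≤ (K:ℝ) := by
        have h0 : ((2*k)^(2*k) : ℕ) ≤ (4*k)^(2*k) := Nat.pow_le_pow_left (by omega) _
        calc ((2*(k:ℝ)))^(2*k) = (((2*k : ℕ)):ℝ)^(2*k) := by push_cast; ring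
          _ ≤ (K:ℝ) := by exact_mod_cast h0
      have hfr : ((ℓ:ℝ)/(2*(n:ℝ)))^(2*k) ≤ p^2 := by
        have h1 : ((ℓ:ℝ)/(2*(n:ℝ)))^(2*k) = (((ℓ:ℝ)/(2*(n:ℝ)))^k)^2 := by
          rw [← pow_mul, mul_comm k 2]
        rw [h1]
        exact pow_le_pow_left₀ (by positivity) (pow_le_pow_left₀ (by positivity) hβ_lb2 k) 2
      calc (((k:ℝ) * ℓ)/(n:ℝ))^(2*k) = ((2*(k:ℝ)))^(2*k) * ((ℓ:ℝ)/(2*(n:ℝ)))^(2*k) := by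
            rw [← mul_pow, ← hkl_eq]
        _ ≤ (K:ℝ) * p^2 := by
            apply mul_le_mul h2kK hfr (by positivity) (le_of_lt hK0R)
    by_cases hB1 : 1 ≤ 8 * (K:ℝ) * p
    · have hδp : δ ≤ p := by
        rw [hδdef, div_le_iff₀ (by positivity)]
        have h9 : (0:ℝ) ≤ 8*(K:ℝ)*p := by positivity
        have h10 : 8*(K:ℝ)*p ≤ p * (16*(K:ℝ)) := by linarith
        linarith
      exact singleton_case m₀ hm₀ hδp
    · push_neg at hB1
      set x : ℝ := 1 / (8 * (K:ℝ) * p) with hxdef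
      have hKp_pos : (0:ℝ) < 8 * (K:ℝ) * p := by
        apply mul_pos (by positivity) hp_pos
      have hx_pos : 0 < x := by
        rw [hxdef]
        positivity
      have hx1 : 1 ≤ x := by
        rw [hxdef, le_div_iff₀ hKp_pos]
        linarith
      set T : ℕ := ⌈x⌉₊ with hTdef
      have hT_ge : x ≤ T := Nat.le_ceil x
      have hT_lt : (T:ℝ) < x + 1 := Nat.ceil_lt_add_one (le_of_lt hx_pos)
      have hT_le : (T:ℝ) ≤ 2 * x := by linarith
      have hxp : x * p = 1 / (8*(K:ℝ)) := by
        rw [hxdef]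
        field_simp
      by_cases hB2 : T ≤ t
      · obtain ⟨M', hM'sub, hM'card⟩ := Finset.exists_subset_card_eq (ht ▸ hB2)
        apply final_step M M' hM'sub hRkℓ hδ0 hδ1 hδR
        have hub := union_lb (ℓ := ℓ) M' (fun m hm => hcard m (hM'sub hm))
          (fun m hm m' hm' hne => hdisj m (hM'sub hm) m' (hM'sub hm') hne)
        rw [hM'card] at hub
        have hcore : δ ≤ (T:ℝ)*p - (T:ℝ)^2 * (((k:ℝ)*ℓ/(n:ℝ))^(2*k)) := by
          have h1 : 1/(8*(K:ℝ)) ≤ (T:ℝ) * p := by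
            rw [← hxp]
            exact mul_le_mul_of_nonneg_right hT_ge hp0
          have h2 : (T:ℝ)^2 * (((k:ℝ)*ℓ/(n:ℝ))^(2*k)) ≤ 1/(16*(K:ℝ)) := by
            have h2a : (T:ℝ)^2 * (((k:ℝ)*ℓ/(n:ℝ))^(2*k)) ≤ (2*x)^2 * ((K:ℝ)*p^2) := by
              apply mul_le_mul (pow_le_pow_left₀ (by positivity) hT_le 2) hratio
                (by positivity) (by positivity)
            have h2b : (2*x)^2 * ((K:ℝ)*p^2) = 4 * ((x*p)^2) * K := by ring
            have h2c : 4 * ((x*p)^2) * K = 1/(16*(K:ℝ)) := by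
              rw [hxp]
              field_simp
              ring
            linarith
          have h3 : (1:ℝ)/(16*(K:ℝ)) = 1/(8*(K:ℝ)) - 1/(16*(K:ℝ)) := by
            field_simp
            ring
          rw [hδdef]
          linarith
        calc δ * (n:ℝ)^(k*ℓ)
            ≤ ((T:ℝ)*p - (T:ℝ)^2 * (((k:ℝ)*ℓ/(n:ℝ))^(2*k))) * (n:ℝ)^(k*ℓ) :=
              mul_le_mul_of_nonneg_right hcore (by positivity)
          _ = (T:ℝ)*(p*(n:ℝ)^(k*ℓ))
              - (T:ℝ)^2 * ((((k:ℝ)*ℓ/(n:ℝ))^(2*k)) * (n:ℝ)^(k*ℓ)) := by ring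
          _ = (T:ℝ)*((q:ℝ)^k)
              - (T:ℝ)^2 * ((((k*ℓ)^(2*k) * n^(k*ℓ-2*k) : ℕ)):ℝ) := by rw [hqk_eq, hPBR]
          _ ≤ _ := by
              rw [hqdef]
              exact hub
      · push_neg at hB2
        apply final_step M M (Finset.Subset.refl M) hRkℓ hδ0 hδ1 hδR
        have hub := union_lb (ℓ := ℓ) M hcard hdisj
        have htx : (t:ℝ) ≤ x := by
          have h1 : (t:ℝ) + 1 ≤ (T:ℝ) := by exact_mod_cast hB2
          linarith
        have hCRk : ((4*R*k : ℕ):ℝ) = 4*(R:ℝ)*k := by push_cast; ring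
        have hkR0 : (k:ℝ) ≠ 0 := by
          have : (0:ℝ) < k := by exact_mod_cast hk
          linarith
        have hts : ((4*(R:ℝ)*k) * n / s) ≤ (t:ℝ)^((1:ℝ)/(k:ℝ)) := by
          rw [div_le_iff₀ hs0R]
          rw [div_le_iff₀ hrpos] at hs
          calc 4*(R:ℝ)*k*(n:ℝ) = ((4*R*k:ℕ):ℝ)*n := by rw [hCRk]
            _ ≤ (s:ℝ) * ((t:ℝ)^((1:ℝ)/(k:ℝ))) := hs
            _ = (t:ℝ)^((1:ℝ)/(k:ℝ)) * s := by ring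
        have htk : ((4*(R:ℝ)*k) * n / s)^k ≤ (t:ℝ) := by
          have h1 : (((t:ℝ)^((1:ℝ)/(k:ℝ)))^(k:ℕ)) = (t:ℝ) := by
            rw [← Real.rpow_natCast ((t:ℝ)^((1:ℝ)/(k:ℝ))) k, ← Real.rpow_mul (le_of_lt ht0R)]
            rw [one_div, inv_mul_cancel₀ hkR0, Real.rpow_one]
          calc ((4*(R:ℝ)*k) * n / s)^k ≤ (((t:ℝ)^((1:ℝ)/(k:ℝ)))^(k:ℕ)) :=
                pow_le_pow_left₀ (by positivity) hts k
            _ = (t:ℝ) := h1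
        have hβs : (s:ℝ)/(4*(R:ℝ)*k*n) ≤ β := by
          refine le_trans ?_ hβ_lb2
          rw [div_le_div_iff₀ (by positivity) (by positivity)]
          have h1 : (s:ℝ) * (2*(n:ℝ)) ≤ (2*((R:ℝ)*k)*ℓ) * (2*(n:ℝ)) :=
            mul_le_mul_of_nonneg_right hsℓR (by positivity)
          have h2 : (2*((R:ℝ)*k)*ℓ) * (2*(n:ℝ)) = (ℓ:ℝ) * (4*(R:ℝ)*k*n) := by ring
          linarith
        have htp : 1 ≤ (t:ℝ) * p := by
          have h2 : ((s:ℝ)/(4*(R:ℝ)*k*n))^k ≤ p := pow_le_pow_left₀ (by positivity) hβs k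
          have h3 : ((4*(R:ℝ)*k) * n / s) * ((s:ℝ)/(4*(R:ℝ)*k*n)) = 1 := by
            field_simp
          calc (1:ℝ) = (((4*(R:ℝ)*k) * n / s) * ((s:ℝ)/(4*(R:ℝ)*k*n)))^k := by
                rw [h3, one_pow]
            _ = ((4*(R:ℝ)*k) * n / s)^k * ((s:ℝ)/(4*(R:ℝ)*k*n))^k := mul_pow _ _ _
            _ ≤ (t:ℝ) * p := by
                apply mul_le_mul htk h2 (by positivity) (le_of_lt ht0R)
        have hxKp : x * ((K:ℝ)*p) = 1/8 := by
          rw [hxdef]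
          field_simp
        have hcore : δ ≤ (t:ℝ)*p - (t:ℝ)^2 * (((k:ℝ)*ℓ/(n:ℝ))^(2*k)) := by
          have h3 : (t:ℝ)^2*(((k:ℝ)*ℓ/(n:ℝ))^(2*k)) ≤ (t:ℝ)^2 * ((K:ℝ)*p^2) :=
            mul_le_mul_of_nonneg_left hratio (by positivity)
          have h4 : (t:ℝ)^2 * ((K:ℝ)*p^2) = ((t:ℝ)*p) * ((t:ℝ)*((K:ℝ)*p)) := by ring
          have h5 : (t:ℝ)*((K:ℝ)*p) ≤ x*((K:ℝ)*p) := by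
            apply mul_le_mul_of_nonneg_right htx
            exact mul_nonneg (le_of_lt hK0R) hp0
          have h6 : ((t:ℝ)*p) * ((t:ℝ)*((K:ℝ)*p)) ≤ ((t:ℝ)*p) * (1/8) := by
            apply mul_le_mul_of_nonneg_left _ (by positivity)
            rw [← hxKp]
            exact h5
          have h7 : δ ≤ 1/16 := by
            rw [hδdef]
            have hKR : (1:ℝ) ≤ (K:ℝ) := by exact_mod_cast hK1
            rw [div_le_div_iff₀ (by positivity) (by norm_num)]
            linarith
          linarith [h3, h6, h7, htp, h4.le, h4.ge]
        calc δ * (n:ℝ)^(k*ℓ)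
            ≤ ((t:ℝ)*p - (t:ℝ)^2 * (((k:ℝ)*ℓ/(n:ℝ))^(2*k))) * (n:ℝ)^(k*ℓ) :=
              mul_le_mul_of_nonneg_right hcore (by positivity)
          _ = (t:ℝ)*(p*(n:ℝ)^(k*ℓ))
              - (t:ℝ)^2 * ((((k:ℝ)*ℓ/(n:ℝ))^(2*k)) * (n:ℝ)^(k*ℓ)) := by ring
          _ = (t:ℝ)*((q:ℝ)^k)
              - (t:ℝ)^2 * ((((k*ℓ)^(2*k) * n^(k*ℓ-2*k) : ℕ)):ℝ) := by rw [hqk_eq, hPBR]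
          _ ≤ _ := by
              rw [hqdef]
              exact hub
end

section
/- Let k, n, d ≥ 1, let π be a permutation of [k], and let ε ∈ (0,1]. There exists a constant C > 0 depending only on k such that: for every f : [n]^d → ℝ whose deletion distance from π-freeness is at least ε·n^d, if s ≥ C·n^{d(1 − 1/k)} / ε^{1/k} points x_1,…,x_s are sampled independently and uniformly at random from [n]^d (under the uniform product measure on ([n]^d)^s), then with probability at least 1/2 the set {x_1,…,x_s} contains the k indices of some π-appearance of f. -/
open Finset

section Counting
attribute [local instance] Classical.propDecidable
variable {α : Type*} [DecidableEq α] [Fintype α]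

/-- the cons equivalence -/
def consEquiv {s : ℕ} : (α × (Fin s → α)) ≃ (Fin (s + 1) → α) :=
  { toFun := fun p => Fin.cons p.1 p.2
    invFun := fun x => (x 0, Fin.tail x)
    left_inv := by
      intro p
      simp [Fin.tail]
    right_inv := by
      intro x
      simp [Fin.tail, Fin.cons_self_tail] }

/-- number of `s`-tuples whose range covers `T` -/
noncomputable def cov (s : ℕ) (T : Finset α) : ℕ :=
  (Finset.univ.filter (fun x : Fin s → α => ∀ a ∈ T, ∃ j, x j = a)).card

lemma cov_empty (s : ℕ) : cov (α := α) s ∅ = (Fintype.card α) ^ s := by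
  classical
  rw [cov]
  simp [Finset.filter_true_of_mem, Fintype.card_fun]

lemma cov_eq_sum (s : ℕ) (T : Finset α) :
    cov s T = ∑ x : Fin s → α, (if ∀ a ∈ T, ∃ j, x j = a then 1 else 0) := by
  rw [cov, Finset.card_filter]

lemma cov_anti (s : ℕ) {T T' : Finset α} (h : T ⊆ T') : cov s T' ≤ cov s T := by
  apply Finset.card_le_card
  intro x hx
  simp only [Finset.mem_filter] at hx ⊢
  exact ⟨hx.1, fun a ha => hx.2 a (h ha)⟩

lemma cov_zero_nonempty {T : Finset α} (h : T.Nonempty) : cov 0 T = 0 := by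
  rw [cov, Finset.card_eq_zero, Finset.filter_eq_empty_iff]
  intro x _
  obtain ⟨a, ha⟩ := h
  intro hx
  obtain ⟨j, _⟩ := hx a ha
  exact j.elim0

lemma cov_succ (s : ℕ) (T : Finset α) :
    cov (s + 1) T = ∑ v : α, cov s (T.erase v) := by
  classical
  rw [cov_eq_sum, ← Equiv.sum_comp (consEquiv (α := α) (s := s))
    (fun x => if ∀ a ∈ T, ∃ j, x j = a then 1 else 0)]
  simp only [consEquiv, Equiv.coe_fn_mk]
  rw [Fintype.sum_prod_type]
  congr 1
  ext v
  rw [cov_eq_sum, Finset.sum_congr rfl]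
  intro y _
  congr 1
  apply propext
  constructor
  · intro h a ha
    rcases h a (Finset.mem_of_mem_erase ha) with ⟨j, hj⟩
    rcases Fin.eq_zero_or_eq_succ j with rfl | ⟨j', rfl⟩
    · exfalso
      rw [Fin.cons_zero] at hj
      exact (Finset.ne_of_mem_erase ha) hj.symm
    · rw [Fin.cons_succ] at hj
      exact ⟨j', hj⟩
  · intro h a ha
    by_cases hva : a = v
    · exact ⟨0, by rw [Fin.cons_zero, hva]⟩
    · rcases h a (Finset.mem_erase.2 ⟨hva, ha⟩) with ⟨j, hj⟩
      exact ⟨j.succ, by rw [Fin.cons_succ]; exact hj⟩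


/-- Negative correlation of coverage events for disjoint target sets. -/
lemma cov_nc : ∀ (s : ℕ) (T T' : Finset α), Disjoint T T' →
    (Fintype.card α) ^ s * cov s (T ∪ T') ≤ cov s T * cov s T' := by
  intro s
  induction s with
  | zero =>
    intro T T' _
    rcases T.eq_empty_or_nonempty with rfl | hT
    · rcases T'.eq_empty_or_nonempty with rfl | hT'
      · simp [cov_empty]
      · have h1 : ((∅ ∪ T' : Finset α)).Nonempty := by simpa using hT'
        simp [cov_zero_nonempty h1, cov_zero_nonempty hT']
    · have h1 : ((T ∪ T')).Nonempty := hT.mono Finset.subset_union_left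
      simp [cov_zero_nonempty h1, cov_zero_nonempty hT]
  | succ s ih =>
    intro T T' hd
    set A : α → ℕ := fun v => cov s (T.erase v) with hA
    set B : α → ℕ := fun v => cov s (T'.erase v) with hB
    have hAlow : ∀ v, cov s T ≤ A v := fun v => cov_anti s (Finset.erase_subset _ _)
    have hBlow : ∀ v, cov s T' ≤ B v := fun v => cov_anti s (Finset.erase_subset _ _)
    have hanti : AntivaryOn A B (Finset.univ : Finset α) := by
      intro i _ j _ hlt
      have hj : j ∈ T' := by
        by_contra hj
        have hBj : B j = cov s T' := by rw [hB]; simp [Finset.erase_eq_of_notMem hj]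
        rw [hBj] at hlt
        exact absurd hlt (not_lt.2 (hBlow i))
      have hjT : j ∉ T := fun hjT => (Finset.disjoint_left.1 hd hjT) hj
      have hAj : A j = cov s T := by rw [hA]; simp [Finset.erase_eq_of_notMem hjT]
      rw [hAj]
      exact hAlow i
    calc (Fintype.card α) ^ (s+1) * cov (s+1) (T ∪ T')
        = ∑ v : α, (Fintype.card α) *
            ((Fintype.card α) ^ s * cov s ((T ∪ T').erase v)) := by
          rw [cov_succ, Finset.mul_sum]
          refine Finset.sum_congr rfl (fun v _ => by ring)
      _ ≤ ∑ v : α, (Fintype.card α) * (A v * B v) := by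
          refine Finset.sum_le_sum (fun v _ => ?_)
          refine Nat.mul_le_mul_left _ ?_
          rw [Finset.erase_union_distrib]
          exact ih _ _ (Disjoint.mono (Finset.erase_subset _ _) (Finset.erase_subset _ _) hd)
      _ = ((Finset.univ : Finset α).card : ℕ) * ∑ v ∈ (Finset.univ : Finset α), A v * B v := by
          rw [← Finset.mul_sum, Finset.card_univ]
      _ ≤ (∑ v ∈ (Finset.univ : Finset α), A v) * (∑ v ∈ (Finset.univ : Finset α), B v) :=
          hanti.card_mul_sum_le_sum_mul_sum
      _ = cov (s+1) T * cov (s+1) T' := by rw [cov_succ, cov_succ]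

noncomputable def hitc (t : ℕ) (a : α) : ℕ :=
  (Finset.univ.filter (fun u : Fin t → α => ∃ q, u q = a)).card

lemma hitc_eq (t : ℕ) (a : α) :
    hitc t a = (Fintype.card α) ^ t - (Fintype.card α - 1) ^ t := by
  classical
  have hneg : (Finset.univ.filter (fun u : Fin t → α => ¬ ∃ q, u q = a)).card
      = (Fintype.card α - 1) ^ t := by
    have e : {u : Fin t → α // ∀ q : Fin t, u q ≠ a} ≃ (Fin t → {b : α // b ≠ a}) :=
      Equiv.subtypePiEquivPi (p := fun (_ : Fin t) (b : α) => b ≠ a)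
    have e2 : {u : Fin t → α // ¬ ∃ q, u q = a} ≃ {u : Fin t → α // ∀ q : Fin t, u q ≠ a} := by
      apply Equiv.subtypeEquivRight
      intro u
      push_neg
      rfl
    have hcard : Fintype.card {b : α // b ≠ a} = Fintype.card α - 1 := by
      rw [Fintype.card_subtype_compl, Fintype.card_subtype_eq]
    have : Fintype.card {u : Fin t → α // ¬ ∃ q, u q = a} = (Fintype.card α - 1) ^ t := by
      rw [Fintype.card_congr (e2.trans e), Fintype.card_pi]
      simp [hcard]
    rw [← this, Fintype.card_subtype]
  have htot := Finset.card_filter_add_card_filter_not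
    (s := (Finset.univ : Finset (Fin t → α))) (p := fun u => ∃ q, u q = a)
  have huniv : (Finset.univ : Finset (Fin t → α)).card = (Fintype.card α) ^ t := by
    rw [Finset.card_univ, Fintype.card_fun, Fintype.card_fin]
  rw [hneg, huniv] at htot
  have hh : hitc t a = (Finset.univ.filter (fun u : Fin t → α => ∃ q, u q = a)).card := rfl
  rw [hh]
  exact Nat.eq_sub_of_add_eq htot

lemma cov_split (t s' : ℕ) (a : α) (T : Finset α) (ha : a ∈ T) :
    hitc t a * cov s' (T.erase a) ≤ cov (t + s') T := by
  classical
  have h1 : hitc t a * cov s' (T.erase a) =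
      Fintype.card ({u : Fin t → α // ∃ q, u q = a} ×
        {y : Fin s' → α // ∀ b ∈ T.erase a, ∃ j, y j = b}) := by
    rw [Fintype.card_prod, Fintype.card_subtype, Fintype.card_subtype]
    rfl
  have h2 : cov (t + s') T = Fintype.card {x : Fin (t + s') → α // ∀ b ∈ T, ∃ j, x j = b} := by
    rw [Fintype.card_subtype]
    rfl
  rw [h1, h2]
  have hmem : ∀ p : ({u : Fin t → α // ∃ q, u q = a} ×
      {y : Fin s' → α // ∀ b ∈ T.erase a, ∃ j, y j = b}),
      ∀ b ∈ T, ∃ j, (Fin.append p.1.1 p.2.1) j = b := by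
    intro p b hb
    by_cases hba : b = a
    · obtain ⟨q, hq⟩ := p.1.2
      exact ⟨Fin.castAdd s' q, by rw [Fin.append_left, hq, hba]⟩
    · obtain ⟨j, hj⟩ := p.2.2 b (Finset.mem_erase.2 ⟨hba, hb⟩)
      exact ⟨Fin.natAdd t j, by rw [Fin.append_right]; exact hj⟩
  apply Fintype.card_le_of_injective (fun p => ⟨Fin.append p.1.1 p.2.1, hmem p⟩)
  intro p p' h
  have hval : Fin.append p.1.1 p.2.1 = Fin.append p'.1.1 p'.2.1 := congrArg Subtype.val h
  have hu : p.1.1 = p'.1.1 := by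
    funext q
    have := congrFun hval (Fin.castAdd s' q)
    rwa [Fin.append_left, Fin.append_left] at this
  have hy : p.2.1 = p'.2.1 := by
    funext j
    have := congrFun hval (Fin.natAdd t j)
    rwa [Fin.append_right, Fin.append_right] at this
  exact Prod.ext (Subtype.ext hu) (Subtype.ext hy)

/-- lower bound: block construction -/
lemma cov_lower (t : ℕ) : ∀ (T : Finset α), ∀ (s : ℕ), T.card * t ≤ s →
    ((Fintype.card α) ^ t - (Fintype.card α - 1) ^ t) ^ T.card
      * (Fintype.card α) ^ (s - T.card * t) ≤ cov s T := by
  classical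
  intro T
  induction T using Finset.induction_on with
  | empty => intro s _; simp [cov_empty]
  | @insert a T' ha ih =>
    intro s hs
    rw [Finset.card_insert_of_notMem ha, Nat.succ_mul] at hs ⊢
    have hts : t ≤ s := le_trans (by omega) hs
    have hs' : T'.card * t ≤ s - t := by omega
    have key := cov_split t (s - t) a (insert a T') (Finset.mem_insert_self a T')
    rw [Finset.erase_insert ha] at key
    have harith : t + (s - t) = s := by omega
    rw [harith] at key
    refine le_trans ?_ key
    rw [hitc_eq]
    calc ((Fintype.card α) ^ t - (Fintype.card α - 1) ^ t) ^ (T'.card + 1)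
          * (Fintype.card α) ^ (s - (T'.card * t + t))
        = ((Fintype.card α) ^ t - (Fintype.card α - 1) ^ t) *
          (((Fintype.card α) ^ t - (Fintype.card α - 1) ^ t) ^ T'.card
            * (Fintype.card α) ^ ((s - t) - T'.card * t)) := by
          rw [pow_succ]
          have : s - (T'.card * t + t) = (s - t) - T'.card * t := by omega
          rw [this]
          ring
      _ ≤ ((Fintype.card α) ^ t - (Fintype.card α - 1) ^ t) * cov (s - t) T' :=
          Nat.mul_le_mul_left _ (ih (s - t) hs')
end Counting



lemma pow_NT (N : ℕ) (hN : 1 ≤ N) : ∀ t : ℕ, (N-1)^t * (N+t) ≤ N^(t+1) := by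
  intro t
  induction t with
  | zero => simp
  | succ t ih =>
    obtain ⟨M, rfl⟩ : ∃ M, N = M + 1 := ⟨N - 1, by omega⟩
    have h1 : (M + 1 - 1) = M := by omega
    rw [h1] at ih ⊢
    have e1 : M ^ (t+1) * (M + 1 + (t+1)) = M ^ t * (M * (M + t + 2)) := by ring
    have e2 : M * (M + t + 2) ≤ (M + 1) * (M + t + 1) := by
      have : M * (M + t + 2) = M * (M + t + 1) + M := by ring
      have h2 : (M + 1) * (M + t + 1) = M * (M + t + 1) + (M + t + 1) := by ring
      omega
    calc M ^ (t+1) * (M + 1 + (t+1)) = M ^ t * (M * (M + t + 2)) := e1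
      _ ≤ M ^ t * ((M + 1) * (M + t + 1)) := Nat.mul_le_mul_left _ e2
      _ = (M ^ t * (M + 1 + t)) * (M + 1) := by ring
      _ ≤ (M + 1) ^ (t + 1) * (M + 1) := Nat.mul_le_mul_right _ ih
      _ = (M + 1) ^ (t + 1 + 1) := by ring

lemma aux_two (k : ℕ) (hk : 1 ≤ k) : (2*(k:ℝ)+1)^k ≤ 2 * (2*(k:ℝ))^k := by
  have hk0 : (k:ℝ) ≠ 0 := by
    have : (1:ℝ) ≤ (k:ℝ) := by exact_mod_cast hk
    linarith
  have hkpos : (0:ℝ) < (k:ℝ) := by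
    have : (1:ℝ) ≤ (k:ℝ) := by exact_mod_cast hk
    linarith
  have hsplit : (2*(k:ℝ)+1) = (2*(k:ℝ)) * (1 + 1/(2*(k:ℝ))) := by field_simp
  have hhalf : Real.exp (1/2 : ℝ) ≤ 2 := by
    have hsq : Real.exp (1/2 : ℝ) * Real.exp (1/2 : ℝ) = Real.exp 1 := by
      rw [← Real.exp_add]; norm_num
    have := Real.exp_one_lt_d9
    nlinarith [Real.exp_pos (1/2 : ℝ)]
  have hexp : (1 + 1/(2*(k:ℝ)))^k ≤ 2 := by
    have h1 : (1 + 1/(2*(k:ℝ))) ≤ Real.exp (1/(2*(k:ℝ))) := by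
      have := Real.add_one_le_exp (1/(2*(k:ℝ)))
      linarith
    have h2 : (1 + 1/(2*(k:ℝ)))^k ≤ (Real.exp (1/(2*(k:ℝ))))^k := by
      apply pow_le_pow_left₀ (by positivity) h1
    have h3 : (Real.exp (1/(2*(k:ℝ))))^k = Real.exp ((k:ℝ) * (1/(2*(k:ℝ)))) := by
      rw [Real.exp_nat_mul]
    have h4 : (k:ℝ) * (1/(2*(k:ℝ))) = 1/2 := by
      field_simp
    rw [h3, h4] at h2
    exact le_trans h2 hhalf
  calc (2*(k:ℝ)+1)^k = (2*(k:ℝ))^k * (1 + 1/(2*(k:ℝ)))^k := by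
        rw [hsplit, mul_pow]
    _ ≤ (2*(k:ℝ))^k * 2 := by
        apply mul_le_mul_of_nonneg_left hexp (by positivity)
    _ = 2 * (2*(k:ℝ))^k := by ring

lemma key_numeric (k m N t s : ℕ) (ε : ℝ) (hk : 1 ≤ k) (hm : 1 ≤ m) (hN : 1 ≤ N)
    (ht1 : 1 ≤ t) (hε : 0 < ε)
    (hεm : ε * (N:ℝ) ≤ (k:ℝ) * m)
    (hst : (s:ℝ) ≤ 2 * (k:ℝ) * t)
    (H : (16*(k:ℝ)^3)^k * (N:ℝ)^(k-1) ≤ ε * (s:ℝ)^k) :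
    ((N:ℝ) + t)^k ≤ ((m:ℝ)+1) * (t:ℝ)^k := by
  have hkR : (1:ℝ) ≤ (k:ℝ) := by exact_mod_cast hk
  have hmR : (1:ℝ) ≤ (m:ℝ) := by exact_mod_cast hm
  have hNR : (1:ℝ) ≤ (N:ℝ) := by exact_mod_cast hN
  have htR : (1:ℝ) ≤ (t:ℝ) := by exact_mod_cast ht1
  have hsR : (0:ℝ) ≤ (s:ℝ) := Nat.cast_nonneg s
  set C : ℝ := 16*(k:ℝ)^3 with hC
  have hNk : (N:ℝ)^k = (N:ℝ)^(k-1) * N := by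
    rw [← pow_succ]
    congr 1
    omega
  have G1 : C^k * (N:ℝ)^k ≤ (k:ℝ)*m*(s:ℝ)^k := by
    rw [hNk, ← mul_assoc]
    calc C^k * (N:ℝ)^(k-1) * N ≤ (ε * (s:ℝ)^k) * N := by
          apply mul_le_mul_of_nonneg_right H (by linarith)
      _ = (ε * N) * (s:ℝ)^k := by ring
      _ ≤ ((k:ℝ)*m) * (s:ℝ)^k := by
          apply mul_le_mul_of_nonneg_right hεm (by positivity)
  have G2 : C^k * (N:ℝ)^k ≤ (k:ℝ)*m*((2*(k:ℝ))^k * (t:ℝ)^k) := by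
    refine le_trans G1 ?_
    have : (s:ℝ)^k ≤ (2*(k:ℝ)*t)^k := pow_le_pow_left₀ hsR hst k
    rw [mul_pow] at this
    apply mul_le_mul_of_nonneg_left this (by positivity)
  rcases le_or_gt (t:ℝ) (N:ℝ) with hcase | hcase
  · -- case t ≤ N : bound (N+t)^k ≤ (2N)^k ≤ m t^k
    have hub : ((N:ℝ)+t)^k ≤ (2*(N:ℝ))^k :=
      pow_le_pow_left₀ (by linarith) (by linarith) k
    have hkey : (k:ℝ)*(4*(k:ℝ))^k ≤ C^k := by
      have hCeq : C^k = (4*(k:ℝ))^k * (4*(k:ℝ)^2)^k := by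
        rw [← mul_pow]
        congr 1
        ring
      rw [hCeq]
      have h1 : (k:ℝ) ≤ (4*(k:ℝ)^2)^k := by
        have h2 : (k:ℝ) ≤ 4*(k:ℝ)^2 := by nlinarith
        have h3 : 4*(k:ℝ)^2 ≤ (4*(k:ℝ)^2)^k := le_self_pow₀ (by nlinarith) (by omega)
        linarith
      calc (k:ℝ)*(4*(k:ℝ))^k = (4*(k:ℝ))^k * (k:ℝ) := by ring
        _ ≤ (4*(k:ℝ))^k * (4*(k:ℝ)^2)^k := by
            apply mul_le_mul_of_nonneg_left h1 (by positivity)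
    have hA : (0:ℝ) < (k:ℝ)*(2*(k:ℝ))^k := by positivity
    have main : (2*(N:ℝ))^k ≤ (m:ℝ) * (t:ℝ)^k := by
      refine le_of_mul_le_mul_left ?_ hA
      have e1 : (k:ℝ)*(2*(k:ℝ))^k * ((2*(N:ℝ))^k) = ((k:ℝ)*(4*(k:ℝ))^k) * (N:ℝ)^k := by
        have : (2*(k:ℝ))^k * (2:ℝ)^k = (4*(k:ℝ))^k := by
          rw [← mul_pow]
          congr 1
          ring
        rw [mul_pow (2:ℝ) (N:ℝ) k, ← this]
        ring
      calc (k:ℝ)*(2*(k:ℝ))^k * ((2*(N:ℝ))^k) = ((k:ℝ)*(4*(k:ℝ))^k) * (N:ℝ)^k := e1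
        _ ≤ C^k * (N:ℝ)^k := by
            apply mul_le_mul_of_nonneg_right hkey (by positivity)
        _ ≤ (k:ℝ)*m*((2*(k:ℝ))^k * (t:ℝ)^k) := G2
        _ = (k:ℝ)*(2*(k:ℝ))^k * ((m:ℝ) * (t:ℝ)^k) := by ring
    have : ((m:ℝ)) * (t:ℝ)^k ≤ ((m:ℝ)+1) * (t:ℝ)^k := by
      apply mul_le_mul_of_nonneg_right (by linarith) (by positivity)
    linarith
  · -- case N < t
    rcases le_or_gt ((2:ℝ)^k) ((m:ℝ)+1) with hm2 | hm2
    · have hub : ((N:ℝ)+t)^k ≤ (2*(t:ℝ))^k :=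
        pow_le_pow_left₀ (by linarith) (by linarith) k
      rw [mul_pow] at hub
      calc ((N:ℝ)+t)^k ≤ (2:ℝ)^k * (t:ℝ)^k := hub
        _ ≤ ((m:ℝ)+1) * (t:ℝ)^k := by
            apply mul_le_mul_of_nonneg_right hm2 (by positivity)
    · have hmlt : (m:ℝ) ≤ 2^k := by linarith
      -- first show 2kN ≤ t
      have hC2 : (k:ℝ)*(2:ℝ)^k*((2*(k:ℝ))^k*(2*(k:ℝ))^k) ≤ C^k := by
        have hCeq : C^k = ((2*(k:ℝ))^k*(2*(k:ℝ))^k)*(4*(k:ℝ))^k := by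
          rw [← mul_pow, ← mul_pow]
          congr 1
          ring
        rw [hCeq]
        have h1 : (k:ℝ)*(2:ℝ)^k ≤ (4*(k:ℝ))^k := by
          have e1 : (4*(k:ℝ))^k = (2:ℝ)^k * (2*(k:ℝ))^k := by
            rw [← mul_pow]
            congr 1
            ring
          have h2 : 2*(k:ℝ) ≤ (2*(k:ℝ))^k := le_self_pow₀ (by linarith) (by omega)
          have h3 : (k:ℝ) ≤ (2*(k:ℝ))^k := by linarith
          rw [e1]
          calc (k:ℝ)*(2:ℝ)^k = (2:ℝ)^k * (k:ℝ) := by ring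
            _ ≤ (2:ℝ)^k * (2*(k:ℝ))^k := by
                apply mul_le_mul_of_nonneg_left h3 (by positivity)
        calc (k:ℝ)*(2:ℝ)^k*((2*(k:ℝ))^k*(2*(k:ℝ))^k)
            = ((2*(k:ℝ))^k*(2*(k:ℝ))^k) * ((k:ℝ)*(2:ℝ)^k) := by ring
          _ ≤ ((2*(k:ℝ))^k*(2*(k:ℝ))^k) * (4*(k:ℝ))^k := by
              apply mul_le_mul_of_nonneg_left h1 (by positivity)
      have hB : (0:ℝ) < (k:ℝ)*(2:ℝ)^k*(2*(k:ℝ))^k := by positivity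
      have hpow : (2*(k:ℝ)*N)^k ≤ (t:ℝ)^k := by
        refine le_of_mul_le_mul_left ?_ hB
        calc (k:ℝ)*(2:ℝ)^k*(2*(k:ℝ))^k * ((2*(k:ℝ)*N)^k)
            = ((k:ℝ)*(2:ℝ)^k*((2*(k:ℝ))^k*(2*(k:ℝ))^k)) * (N:ℝ)^k := by
              rw [mul_pow (2*(k:ℝ)) (N:ℝ) k]
              ring
          _ ≤ C^k * (N:ℝ)^k := by
              apply mul_le_mul_of_nonneg_right hC2 (by positivity)
          _ ≤ (k:ℝ)*m*((2*(k:ℝ))^k * (t:ℝ)^k) := G2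
          _ ≤ (k:ℝ)*(2:ℝ)^k*((2*(k:ℝ))^k * (t:ℝ)^k) := by
              have : (k:ℝ)*m ≤ (k:ℝ)*(2:ℝ)^k := by
                apply mul_le_mul_of_nonneg_left hmlt (by linarith)
              apply mul_le_mul_of_nonneg_right this (by positivity)
          _ = (k:ℝ)*(2:ℝ)^k*(2*(k:ℝ))^k * ((t:ℝ)^k) := by ring
      have hTbig : 2*(k:ℝ)*N ≤ (t:ℝ) :=
        le_of_pow_le_pow_left₀ (by omega) (by linarith) hpow
      have hfin : (2*(k:ℝ))^k * (((N:ℝ)+t)^k) ≤ (2*(k:ℝ)+1)^k * (t:ℝ)^k := by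
        rw [← mul_pow, ← mul_pow]
        apply pow_le_pow_left₀ (by positivity) (by nlinarith) k
      have haux := aux_two k hk
      have h2t : (2*(k:ℝ)+1)^k * (t:ℝ)^k ≤ 2 * ((2*(k:ℝ))^k * (t:ℝ)^k) := by
        calc (2*(k:ℝ)+1)^k * (t:ℝ)^k ≤ (2 * (2*(k:ℝ))^k) * (t:ℝ)^k := by
              apply mul_le_mul_of_nonneg_right haux (by positivity)
          _ = 2 * ((2*(k:ℝ))^k * (t:ℝ)^k) := by ring
      have hpos2k : (0:ℝ) < (2*(k:ℝ))^k := by positivity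
      have hres : ((N:ℝ)+t)^k ≤ 2 * (t:ℝ)^k := by
        refine le_of_mul_le_mul_left ?_ hpos2k
        calc (2*(k:ℝ))^k * (((N:ℝ)+t)^k) ≤ (2*(k:ℝ)+1)^k * (t:ℝ)^k := hfin
          _ ≤ 2 * ((2*(k:ℝ))^k * (t:ℝ)^k) := h2t
          _ = (2*(k:ℝ))^k * (2 * (t:ℝ)^k) := by ring
      calc ((N:ℝ)+t)^k ≤ 2 * (t:ℝ)^k := hres
        _ ≤ ((m:ℝ)+1) * (t:ℝ)^k := by
            apply mul_le_mul_of_nonneg_right (by linarith) (by positivity)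

section Packing
attribute [local instance] Classical.propDecidable
variable {n d k : ℕ} {f : (Fin d → Fin n) → ℝ} {π : Equiv.Perm (Fin k)}

lemma appearance_inj {a : Fin k → Fin d → Fin n} (h : IsPiAppearance f π a) :
    Function.Injective a := by
  intro i j hij
  rcases lt_trichotomy i j with hlt | heq | hgt
  · exact absurd hij ((h.1 i j hlt).2)
  · exact heq
  · exact absurd hij.symm ((h.1 j i hgt).2)

lemma appearance_card {a : Fin k → Fin d → Fin n} (h : IsPiAppearance f π a) :
    (Finset.image a Finset.univ).card = k := by
  rw [Finset.card_image_of_injective _ (appearance_inj h), Finset.card_univ, Fintype.card_fin]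

lemma exists_packing (hk : 1 ≤ k) (f : (Fin d → Fin n) → ℝ) (π : Equiv.Perm (Fin k)) :
    ∃ F : Finset (Finset (Fin d → Fin n)),
      (∀ S ∈ F, ∃ a, IsPiAppearance f π a ∧ S = Finset.image a Finset.univ) ∧
      (Set.Pairwise (↑F) (fun S S' : Finset (Fin d → Fin n) => Disjoint S S')) ∧
      patternDeletionDist f π ≤ k * F.card := by
  classical
  set P : Finset (Finset (Fin d → Fin n)) → Prop := fun F =>
    (∀ S ∈ F, ∃ a, IsPiAppearance f π a ∧ S = Finset.image a Finset.univ) ∧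
    (Set.Pairwise (↑F) (fun S S' : Finset (Fin d → Fin n) => Disjoint S S')) with hP
  have hne : (Finset.univ.filter P).Nonempty := by
    refine ⟨∅, Finset.mem_filter.2 ⟨Finset.mem_univ _, ?_, ?_⟩⟩
    · intro S hS; exact absurd hS (Finset.notMem_empty S)
    · simp [Set.Pairwise]
  obtain ⟨F, hFmem, hFmax⟩ := Finset.exists_max_image (Finset.univ.filter P) Finset.card hne
  obtain ⟨hFapp, hFdisj⟩ : P F := (Finset.mem_filter.1 hFmem).2
  refine ⟨F, hFapp, hFdisj, ?_⟩
  set U : Finset (Fin d → Fin n) := F.biUnion id with hU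
  have hfree : PiFreeOn f π ((↑U : Set (Fin d → Fin n))ᶜ) := by
    rintro ⟨x, hx, hmem⟩
    set S₀ : Finset (Fin d → Fin n) := Finset.image x Finset.univ with hS₀def
    have hS₀F : ∀ S ∈ F, Disjoint S₀ S := by
      intro S hS
      rw [Finset.disjoint_left]
      rintro v hv hvS
      obtain ⟨i, _, rfl⟩ := Finset.mem_image.1 hv
      exact (hmem i) (Finset.mem_coe.2 (Finset.mem_biUnion.2 ⟨S, hS, hvS⟩))
    have hS₀notF : S₀ ∉ F := by
      intro hin
      have h0 : x ⟨0, hk⟩ ∈ S₀ := Finset.mem_image_of_mem x (Finset.mem_univ _)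
      exact (Finset.disjoint_left.1 (hS₀F S₀ hin) h0) h0
    have hins : insert S₀ F ∈ Finset.univ.filter P := by
      refine Finset.mem_filter.2 ⟨Finset.mem_univ _, ?_, ?_⟩
      · intro S hS
        rcases Finset.mem_insert.1 hS with rfl | hS'
        · exact ⟨x, hx, rfl⟩
        · exact hFapp S hS'
      · rw [Finset.coe_insert]
        rw [Set.pairwise_insert]
        exact ⟨hFdisj, fun S hS _ => ⟨hS₀F S hS, (hS₀F S hS).symm⟩⟩
    have hcard := hFmax _ hins
    rw [Finset.card_insert_of_notMem hS₀notF] at hcard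
    omega
  have hdle : patternDeletionDist f π ≤ U.card := by
    apply Nat.sInf_le
    exact ⟨(↑U : Set (Fin d → Fin n)), Set.ncard_coe_finset U, hfree⟩
  refine le_trans hdle (le_trans Finset.card_biUnion_le ?_)
  have : ∀ S ∈ F, (id S : Finset (Fin d → Fin n)).card = k := by
    intro S hS
    obtain ⟨a, ha, rfl⟩ := hFapp S hS
    exact appearance_card ha
  rw [Finset.sum_congr rfl this, Finset.sum_const, smul_eq_mul, mul_comm]
end Packing

lemma ind_mul {β : Type*} [DecidableEq β] (S S' : Finset β) (P : β → Prop)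
    (h1d : Decidable (∀ v ∈ S, P v)) (h2d : Decidable (∀ v ∈ S', P v))
    (hud : Decidable (∀ v ∈ S ∪ S', P v)) :
    (@ite ℕ _ h1d 1 0) * (@ite ℕ _ h2d 1 0) = @ite ℕ _ hud 1 0 := by
  by_cases h1 : ∀ v ∈ S, P v
  · by_cases h2 : ∀ v ∈ S', P v
    · rw [if_pos h1, if_pos h2, if_pos (Finset.forall_mem_union.2 ⟨h1, h2⟩), mul_one]
    · rw [if_neg h2, if_neg (fun h => h2 (Finset.forall_mem_union.1 h).2), mul_zero]
  · rw [if_neg h1, if_neg (fun h => h1 (Finset.forall_mem_union.1 h).1), zero_mul]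

set_option maxHeartbeats 1600000 in
/-- For every `k ≥ 1` there is a constant `C > 0` depending only on `k`
such that: for all `n, d ≥ 1`, every permutation `π` of `[k]`, every `ε ∈ (0,1]`, and
every `f : [n]^d → ℝ` with deletion distance at least `ε·n^d` from `π`-freeness, if
`s ≥ C·n^{d(1−1/k)} / ε^{1/k}` points are sampled independently and uniformly from
`[n]^d`, then with probability at least `1/2` the sample contains the `k` indices of
some `π`-appearance of `f` (probability modeled by counting tuples). -/
theorem stmt7 (k : ℕ) (hk : 1 ≤ k) :
    ∃ C : ℝ, 0 < C ∧
      ∀ (n d : ℕ), 1 ≤ n → 1 ≤ d →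
        ∀ (π : Equiv.Perm (Fin k)) (ε : ℝ), 0 < ε → ε ≤ 1 →
          ∀ f : (Fin d → Fin n) → ℝ,
            ε * (n : ℝ) ^ d ≤ (patternDeletionDist f π : ℝ) →
            ∀ s : ℕ,
              C * (n : ℝ) ^ ((d : ℝ) * (1 - 1 / (k : ℝ))) / ε ^ ((1 : ℝ) / (k : ℝ)) ≤ (s : ℝ) →
              (1 / 2 : ℝ) * ((n : ℝ) ^ d) ^ s ≤
                (Set.ncard {x : Fin s → (Fin d → Fin n) |
                  ∃ a : Fin k → Fin d → Fin n, IsPiAppearance f π a ∧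
                    ∀ i, ∃ j, x j = a i} : ℝ) := by
  classical
  refine ⟨16 * (k:ℝ)^3, by positivity, ?_⟩
  intro n d hn hd π ε hε hε1 f hdist s hs
  have hkpos : (0:ℝ) < (k:ℝ) := by exact_mod_cast hk
  have hkR : (1:ℝ) ≤ (k:ℝ) := by exact_mod_cast hk
  have hNcard : Fintype.card (Fin d → Fin n) = n ^ d := by
    rw [Fintype.card_fun, Fintype.card_fin, Fintype.card_fin]
  set N : ℕ := Fintype.card (Fin d → Fin n) with hNdef
  have hN1 : 1 ≤ N := by
    rw [hNcard]
    exact Nat.one_le_pow _ _ (by omega)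
  have hNR : ((n:ℝ))^d = (N:ℝ) := by
    rw [hNcard]
    push_cast
    ring
  have hNR1 : (1:ℝ) ≤ (N:ℝ) := by exact_mod_cast hN1
  have hnR1 : (1:ℝ) ≤ (n:ℝ) := by exact_mod_cast hn
  set A : ℝ := (n:ℝ) ^ ((d:ℝ) * (1 - 1/(k:ℝ))) with hA
  set B : ℝ := ε ^ ((1:ℝ)/(k:ℝ)) with hB
  have hexp0 : (0:ℝ) ≤ (d:ℝ) * (1 - 1/(k:ℝ)) := by
    have : 1/(k:ℝ) ≤ 1 := by
      rw [div_le_one hkpos]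
      exact hkR
    have hd0 : (0:ℝ) ≤ (d:ℝ) := Nat.cast_nonneg d
    nlinarith
  have hA1 : 1 ≤ A := Real.one_le_rpow hnR1 hexp0
  have hB0 : 0 < B := Real.rpow_pos_of_pos hε _
  have hB1 : B ≤ 1 := Real.rpow_le_one hε.le hε1 (by positivity)
  have hsC : 16*(k:ℝ)^3 ≤ (s:ℝ) := by
    refine le_trans ?_ hs
    rw [div_eq_mul_inv]
    have h1 : (1:ℝ) ≤ B⁻¹ := by
      rw [le_inv_comm₀ one_pos hB0]
      simpa using hB1
    have h2 : (1:ℝ) ≤ A * B⁻¹ := by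
      calc (1:ℝ) = 1 * 1 := by ring
        _ ≤ A * B⁻¹ := mul_le_mul hA1 h1 (by norm_num) (le_trans zero_le_one hA1)
    calc 16*(k:ℝ)^3 = 16*(k:ℝ)^3 * 1 := by ring
      _ ≤ 16*(k:ℝ)^3 * (A * B⁻¹) := by
          apply mul_le_mul_of_nonneg_left h2 (by positivity)
      _ = 16*(k:ℝ)^3 * A * B⁻¹ := by ring
  have hs2k : 2*k ≤ s := by
    have hkk : (1:ℝ) ≤ (k:ℝ)^2 := by nlinarith
    have h2k : (2*(k:ℝ)) ≤ 16*(k:ℝ)^3 := by nlinarith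
    have : ((2*k : ℕ):ℝ) ≤ (s:ℝ) := by
      push_cast
      linarith
    exact_mod_cast this
  set t : ℕ := s / k with ht
  have hkt : k * t ≤ s := by
    rw [ht, mul_comm]
    exact Nat.div_mul_le_self s k
  have ht1 : 1 ≤ t := by
    rw [ht]
    rw [Nat.one_le_div_iff (by omega)]
    omega
  have hst : s ≤ 2*k*t := by
    have h1 : k * (s / k) + s % k = s := Nat.div_add_mod s k
    have h2 : s % k < k := Nat.mod_lt _ (by omega)
    have h3 : k ≤ k * t := Nat.le_mul_of_pos_right k (by omega)
    calc s = k*t + s % k := by rw [ht]; omega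
      _ ≤ k*t + k := by omega
      _ ≤ k*t + k*t := by omega
      _ = 2*k*t := by ring
  obtain ⟨F, hFapp, hFdisj, hFbound⟩ := exists_packing hk f π
  set m : ℕ := F.card with hmdef
  have hεm : ε * (N:ℝ) ≤ (k:ℝ) * m := by
    have h1 : ε * (n:ℝ)^d ≤ (patternDeletionDist f π : ℝ) := hdist
    have h2 : (patternDeletionDist f π : ℝ) ≤ ((k*m : ℕ):ℝ) := by exact_mod_cast hFbound
    rw [hNR] at h1
    push_cast at h2
    linarith
  have hm1 : 1 ≤ m := by
    by_contra h
    have hm0 : m = 0 := by omega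
    rw [hm0] at hεm
    push_cast at hεm
    nlinarith
  have hmR1 : (1:ℝ) ≤ (m:ℝ) := by exact_mod_cast hm1
  -- the key analytic hypothesis
  have hAk : A^k = (N:ℝ)^(k-1) := by
    rw [hA, ← Real.rpow_natCast ((n:ℝ) ^ ((d:ℝ) * (1 - 1/(k:ℝ)))) k,
      ← Real.rpow_mul (by positivity)]
    have he : (d:ℝ) * (1 - 1/(k:ℝ)) * k = (d:ℝ) * ((k:ℝ) - 1) := by
      field_simp
      try ring
    have hcast : (d:ℝ) * ((k:ℝ) - 1) = ((d * (k-1) : ℕ) : ℝ) := by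
      push_cast [Nat.cast_sub hk]
      ring
    rw [he, hcast, Real.rpow_natCast, pow_mul, hNR]
  have hBk : B^k = ε := by
    rw [hB, ← Real.rpow_natCast (ε ^ ((1:ℝ)/(k:ℝ))) k, ← Real.rpow_mul hε.le]
    have : (1:ℝ)/(k:ℝ) * k = 1 := by field_simp
    rw [this, Real.rpow_one]
  have H : (16*(k:ℝ)^3)^k * (N:ℝ)^(k-1) ≤ ε * (s:ℝ)^k := by
    have h0 : (0:ℝ) ≤ 16*(k:ℝ)^3 * A / B := by positivity
    have h1 : (16*(k:ℝ)^3 * A / B)^k ≤ (s:ℝ)^k := pow_le_pow_left₀ h0 hs k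
    have h2 : (16*(k:ℝ)^3 * A / B)^k = (16*(k:ℝ)^3)^k * A^k / B^k := by
      rw [div_pow, mul_pow]
    rw [h2, hAk, hBk] at h1
    rw [div_le_iff₀ hε] at h1
    linarith
  have hstR : (s:ℝ) ≤ 2*(k:ℝ)*t := by exact_mod_cast hst
  have hnum := key_numeric k m N t s ε hk hm1 hN1 ht1 hε hεm hstR H
  -- coverage lower bound
  set hh : ℕ := N^t - (N-1)^t with hhdef
  have hhle : (N-1)^t ≤ N^t := Nat.pow_le_pow_left (by omega) t
  have hh1 : 1 ≤ hh := by
    have : (N-1)^t < N^t := Nat.pow_lt_pow_left (by omega) (by omega)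
    omega
  have hcovNT : N^t * t ≤ hh * (N + t) := by
    have h1 := pow_NT N hN1 t
    have h2 : hh * (N+t) + (N-1)^t*(N+t) = N^t*(N+t) := by
      rw [hhdef, ← Nat.add_mul, Nat.sub_add_cancel hhle]
    have h3 : N^t*(N+t) = N^(t+1) + N^t*t := by
      rw [pow_succ]
      ring
    omega
  have hL : ((N:ℝ))^(k*t) ≤ ((m:ℝ)+1) * (hh:ℝ)^k := by
    have hLpow : ((N:ℝ)^t * t)^k ≤ ((hh:ℝ) * ((N:ℝ)+t))^k := by
      apply pow_le_pow_left₀ (by positivity)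
      exact_mod_cast hcovNT
    have htpos : (0:ℝ) < (t:ℝ)^k := by
      have : (1:ℝ) ≤ (t:ℝ) := by exact_mod_cast ht1
      positivity
    refine le_of_mul_le_mul_right ?_ htpos
    calc (N:ℝ)^(k*t) * (t:ℝ)^k = ((N:ℝ)^t * t)^k := by
          rw [mul_comm k t, pow_mul, mul_pow]
      _ ≤ ((hh:ℝ) * ((N:ℝ)+t))^k := hLpow
      _ = (hh:ℝ)^k * ((N:ℝ)+t)^k := mul_pow _ _ _
      _ ≤ (hh:ℝ)^k * (((m:ℝ)+1) * (t:ℝ)^k) := by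
          apply mul_le_mul_of_nonneg_left hnum (by positivity)
      _ = ((m:ℝ)+1) * (hh:ℝ)^k * (t:ℝ)^k := by ring
  set L : ℕ := hh^k * N^(s - k*t) with hLdef
  have hL1 : 1 ≤ L := by
    have h1 : 1 ≤ hh^k := Nat.one_le_pow _ _ (by omega)
    have h2 : 1 ≤ N^(s-k*t) := Nat.one_le_pow _ _ (by omega)
    calc 1 = 1*1 := by ring
      _ ≤ hh^k * N^(s-k*t) := Nat.mul_le_mul h1 h2
  have hLR : (N:ℝ)^s ≤ ((m:ℝ)+1) * (L:ℝ) := by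
    have hsplit : (N:ℝ)^s = (N:ℝ)^(k*t) * (N:ℝ)^(s-k*t) := by
      rw [← pow_add]
      congr 1
      omega
    have hLcast : (L:ℝ) = (hh:ℝ)^k * (N:ℝ)^(s-k*t) := by
      rw [hLdef]
      push_cast
      ring
    rw [hsplit, hLcast]
    calc (N:ℝ)^(k*t) * (N:ℝ)^(s-k*t) ≤ (((m:ℝ)+1) * (hh:ℝ)^k) * (N:ℝ)^(s-k*t) := by
          apply mul_le_mul_of_nonneg_right hL (by positivity)
      _ = ((m:ℝ)+1) * ((hh:ℝ)^k * (N:ℝ)^(s-k*t)) := by ring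
  have hcovS : ∀ S ∈ F, L ≤ cov s S := by
    intro S hS
    obtain ⟨a, ha, rfl⟩ := hFapp S hS
    have hcard : (Finset.image a Finset.univ).card = k := appearance_card ha
    have hle := cov_lower t (Finset.image a Finset.univ) s (by rw [hcard]; exact hkt)
    rw [hcard] at hle
    rw [hLdef, hhdef]
    exact hle
  -- double counting
  set Sig1 : ℕ := ∑ S ∈ F, cov s S with hSig1
  set Sig2 : ℕ := ∑ S ∈ F, ∑ S' ∈ F, cov s (S ∪ S') with hSig2
  set Q : ℕ := ∑ S ∈ F, (cov s S) * (cov s S) with hQdef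
  set D : ℕ := ∑ S ∈ F, (cov s S) * (∑ S' ∈ F.erase S, cov s S') with hDdef
  set G : Finset (Fin s → (Fin d → Fin n)) :=
    Finset.univ.filter (fun x : Fin s → (Fin d → Fin n) => ∃ S ∈ F, ∀ v ∈ S, ∃ j, x j = v)
    with hGdef
  set X : (Fin s → (Fin d → Fin n)) → ℕ :=
    fun x => ∑ S ∈ F, (if ∀ v ∈ S, ∃ j, x j = v then 1 else 0) with hXdef
  have hindcov : ∀ S : Finset (Fin d → Fin n),
      (∑ x : Fin s → (Fin d → Fin n), (if ∀ v ∈ S, ∃ j, x j = v then 1 else 0)) = cov s S := by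
    intro S
    rw [cov, Finset.card_filter]
  have hXsum : (∑ x : Fin s → (Fin d → Fin n), X x) = Sig1 := by
    rw [hXdef, hSig1, Finset.sum_comm]
    exact Finset.sum_congr rfl (fun S _ => hindcov S)
  have hX2sum : (∑ x : Fin s → (Fin d → Fin n), X x * X x) = Sig2 := by
    have hstep : ∀ x : Fin s → (Fin d → Fin n), X x * X x =
        ∑ S ∈ F, ∑ S' ∈ F, (if ∀ v ∈ S ∪ S', ∃ j, x j = v then 1 else 0) := by
      intro x
      rw [hXdef, Finset.sum_mul_sum]
      apply Finset.sum_congr rfl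
      intro S _
      apply Finset.sum_congr rfl
      intro S' _
      exact ind_mul S S' (fun v => ∃ j, x j = v) _ _ _
    rw [Finset.sum_congr rfl (fun x _ => hstep x), Finset.sum_comm, hSig2]
    apply Finset.sum_congr rfl
    intro S _
    rw [Finset.sum_comm]
    exact Finset.sum_congr rfl (fun S' _ => hindcov (S ∪ S'))
  have hXG : ∀ x ∉ G, X x = 0 := by
    intro x hx
    rw [hGdef] at hx
    simp only [Finset.mem_filter, Finset.mem_univ, true_and, not_exists] at hx
    rw [hXdef]
    apply Finset.sum_eq_zero
    intro S hS
    rw [if_neg]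
    intro hc
    exact hx S ⟨hS, hc⟩
  have hGXsum : (∑ x ∈ G, X x) = Sig1 := by
    rw [← hXsum]
    apply Finset.sum_subset (Finset.subset_univ G)
    intro x _ hx
    exact hXG x hx
  have hCS : Sig1 * Sig1 ≤ G.card * Sig2 := by
    have h1 : (∑ x ∈ G, X x)^2 ≤ G.card * ∑ x ∈ G, (X x)^2 := sq_sum_le_card_mul_sum_sq
    have h2 : (∑ x ∈ G, (X x)^2) ≤ ∑ x : Fin s → (Fin d → Fin n), (X x)^2 := by
      apply Finset.sum_le_sum_of_subset (Finset.subset_univ G)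
    have h3 : (∑ x : Fin s → (Fin d → Fin n), (X x)^2) = Sig2 := by
      rw [← hX2sum]
      exact Finset.sum_congr rfl (fun x _ => pow_two (X x))
    rw [hGXsum] at h1
    calc Sig1 * Sig1 = Sig1^2 := by ring
      _ ≤ G.card * ∑ x ∈ G, (X x)^2 := h1
      _ ≤ G.card * Sig2 := by
          apply Nat.mul_le_mul_left
          rw [← h3]
          exact h2
  have hNC : N^s * Sig2 ≤ N^s * Sig1 + D := by
    rw [hSig2, hSig1, hDdef, Finset.mul_sum, Finset.mul_sum]
    rw [← Finset.sum_add_distrib]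
    apply Finset.sum_le_sum
    intro S hS
    have hsplit : (∑ S' ∈ F, cov s (S ∪ S')) = cov s S + ∑ S' ∈ F.erase S, cov s (S ∪ S') := by
      rw [← Finset.add_sum_erase F _ hS, Finset.union_self]
    rw [hsplit, Nat.mul_add]
    apply Nat.add_le_add_left
    rw [Finset.mul_sum, Finset.mul_sum]
    apply Finset.sum_le_sum
    intro S' hS'
    have hne : S ≠ S' := (Finset.ne_of_mem_erase hS').symm
    have hdisj : Disjoint S S' := hFdisj (Finset.mem_coe.2 hS)
      (Finset.mem_coe.2 (Finset.mem_of_mem_erase hS')) hne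
    exact cov_nc s S S' hdisj
  have hDQ : D + Q = Sig1 * Sig1 := by
    rw [hDdef, hQdef, ← Finset.sum_add_distrib]
    have : ∀ S ∈ F, (cov s S) * (∑ S' ∈ F.erase S, cov s S') + (cov s S) * (cov s S)
        = (cov s S) * Sig1 := by
      intro S hS
      rw [← Nat.mul_add, hSig1, ← Finset.add_sum_erase F _ hS]
      ring_nf
    rw [Finset.sum_congr rfl this, ← Finset.sum_mul, hSig1]
  have hQge : L * Sig1 ≤ Q := by
    rw [hQdef, hSig1, Finset.mul_sum]
    apply Finset.sum_le_sum
    intro S hS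
    exact Nat.mul_le_mul_right _ (hcovS S hS)
  have hmL : m * L ≤ Sig1 := by
    rw [hSig1, hmdef]
    calc F.card * L = ∑ _S ∈ F, L := by rw [Finset.sum_const, smul_eq_mul]
      _ ≤ ∑ S ∈ F, cov s S := Finset.sum_le_sum hcovS
  have hSig2ge : Sig1 ≤ Sig2 := by
    rw [hSig1, hSig2]
    apply Finset.sum_le_sum
    intro S hS
    have := Finset.single_le_sum (f := fun S' => cov s (S ∪ S'))
      (fun S' _ => Nat.zero_le _) hS
    simpa using this
  have hSig1ge : 1 ≤ Sig1 := le_trans (by simpa using Nat.mul_le_mul hm1 hL1) hmL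
  -- final assembly over ℝ
  have hNsR : ((N:ℝ))^s * (Sig2:ℝ) ≤ 2 * ((Sig1:ℝ) * (Sig1:ℝ)) := by
    have c1 : ((N^s * Sig2 : ℕ):ℝ) ≤ ((N^s * Sig1 + D : ℕ):ℝ) := by exact_mod_cast hNC
    have c2 : ((D:ℝ)) + (Q:ℝ) = (Sig1:ℝ) * (Sig1:ℝ) := by exact_mod_cast hDQ
    have c3 : (L:ℝ) * (Sig1:ℝ) ≤ (Q:ℝ) := by exact_mod_cast hQge
    have c4 : (m:ℝ) * (L:ℝ) ≤ (Sig1:ℝ) := by exact_mod_cast hmL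
    have c5 : (0:ℝ) ≤ (Sig1:ℝ) := Nat.cast_nonneg _
    have c6 : (0:ℝ) ≤ (L:ℝ) := Nat.cast_nonneg _
    push_cast at c1
    -- N^s * Sig1 ≤ Sig1*Sig1 + Q
    have c7 : ((N:ℝ))^s * (Sig1:ℝ) ≤ (Sig1:ℝ)*(Sig1:ℝ) + (Q:ℝ) := by
      calc ((N:ℝ))^s * (Sig1:ℝ) ≤ (((m:ℝ)+1) * (L:ℝ)) * (Sig1:ℝ) := by
            apply mul_le_mul_of_nonneg_right hLR c5
        _ = ((m:ℝ) * (L:ℝ)) * (Sig1:ℝ) + (L:ℝ) * (Sig1:ℝ) := by ring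
        _ ≤ (Sig1:ℝ)*(Sig1:ℝ) + (Q:ℝ) := by
            have := mul_le_mul_of_nonneg_right c4 c5
            linarith
    linarith
  have hCSR : (Sig1:ℝ) * (Sig1:ℝ) ≤ (G.card:ℝ) * (Sig2:ℝ) := by exact_mod_cast hCS
  have hSig2posR : (0:ℝ) < (Sig2:ℝ) := by
    have : 1 ≤ Sig2 := le_trans hSig1ge hSig2ge
    exact_mod_cast Nat.lt_of_lt_of_le Nat.zero_lt_one this
  have hfinal : ((N:ℝ))^s ≤ 2 * (G.card:ℝ) := by
    refine le_of_mul_le_mul_right ?_ hSig2posR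
    calc ((N:ℝ))^s * (Sig2:ℝ) ≤ 2 * ((Sig1:ℝ) * (Sig1:ℝ)) := hNsR
      _ ≤ 2 * ((G.card:ℝ) * (Sig2:ℝ)) := by linarith
      _ = 2 * (G.card:ℝ) * (Sig2:ℝ) := by ring
  -- inclusion into the goal set
  have hsub : (↑G : Set (Fin s → (Fin d → Fin n))) ⊆
      {x : Fin s → (Fin d → Fin n) |
        ∃ a : Fin k → Fin d → Fin n, IsPiAppearance f π a ∧ ∀ i, ∃ j, x j = a i} := by
    intro x hx
    rw [hGdef] at hx
    simp only [Finset.coe_filter, Set.mem_setOf_eq, Finset.mem_univ, true_and] at hx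
    obtain ⟨S, hS, hcov⟩ := hx
    obtain ⟨a, ha, rfl⟩ := hFapp S hS
    exact ⟨a, ha, fun i => hcov (a i) (Finset.mem_image_of_mem a (Finset.mem_univ i))⟩
  have hncard : (G.card:ℝ) ≤
      ((Set.ncard {x : Fin s → (Fin d → Fin n) |
        ∃ a : Fin k → Fin d → Fin n, IsPiAppearance f π a ∧ ∀ i, ∃ j, x j = a i}):ℝ) := by
    have h1 := Set.ncard_le_ncard hsub (Set.toFinite _)
    rw [Set.ncard_coe_finset] at h1
    exact_mod_cast h1
  have hNsgoal : ((n:ℝ)^d)^s = ((N:ℝ))^s := by rw [hNR]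
  rw [hNsgoal]
  linarith
end

section
/- Let n, d ≥ 1, let f : [n]^d → ℝ, let γ ∈ (0,1], and let B, B' ⊆ [n]^d be nonempty sets with |B| = |B'| = N such that p ≺ q for every p ∈ B and every q ∈ B'. Suppose there exist pairwise distinct points p_1,…,p_K ∈ B and pairwise distinct points q_1,…,q_K ∈ B' with f(p_i) < f(q_i) for every i ∈ [K], where K ≥ γ·N. If ⌈4/γ⌉ points are sampled independently and uniformly at random from B and, independently, ⌈4/γ⌉ points are sampled independently and uniformly at random from B', then with probability at least 1/2 there exist a sampled point p ∈ B and a sampled point q ∈ B' with f(p) < f(q); since p ≺ q, such a pair (p,q) forms a (1,2)-appearance of f. -/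
/-!
Let `t` be a median of the values `f (p i)`. At least `K / 2 ≥ γ N / 2` points of `B` have value
`≤ t`, and since `f (q i) > f (p i)`, at least `γ N / 2` points of `B'` have value `> t`. A batch of
`s = ⌈4 / γ⌉` uniform samples misses a set of density `≥ γ / 2` with probability at most
`(1 - γ / 2) ^ s ≤ e⁻² < 1 / 4`, so both batches hit with probability `≥ (3 / 4) ^ 2 > 1 / 2`, and
hitting samples `p ∈ B`, `q ∈ B'` satisfy `f p ≤ t < f q` and `p ≺ q`.
-/

open Finset

theorem exists_median {ι α : Type*} [Fintype ι] [LinearOrder α] [Nonempty α] (v : ι → α) :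
    ∃ t, Fintype.card ι ≤ 2 * #{i | v i ≤ t} ∧ Fintype.card ι ≤ 2 * #{i | t ≤ v i} := by
  classical
  rcases isEmpty_or_nonempty ι with _ | _
  · exact ⟨Classical.arbitrary α, by simp, by simp⟩
  set S : Finset ι := {i | Fintype.card ι ≤ 2 * #{j | v j ≤ v i}}
  have hS : S.Nonempty := by
    obtain ⟨m, -, hm⟩ := univ.exists_max_image v univ_nonempty
    refine ⟨m, mem_filter.2 ⟨mem_univ m, ?_⟩⟩
    rw [filter_true_of_mem fun j _ => hm j (mem_univ j), card_univ]
    omega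
  obtain ⟨i₀, hi₀, hmin⟩ := S.exists_min_image v hS
  refine ⟨v i₀, (mem_filter.1 hi₀).2, ?_⟩
  have hsplit : #{j | v j < v i₀} + #{j | v i₀ ≤ v j} = Fintype.card ι := by
    simp_rw [← not_lt]
    exact card_filter_add_card_filter_not _
  suffices hbelow : 2 * #{j | v j < v i₀} ≤ Fintype.card ι by omega
  rcases (univ.filter fun j => v j < v i₀).eq_empty_or_nonempty with hempty | hne
  · rw [hempty, card_empty]; omega
  -- the largest value below `v i₀` is not in `S`, by minimality of `v i₀`
  obtain ⟨j, hj, hjmax⟩ := exists_max_image _ v hne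
  have hjS : j ∉ S := fun h => (mem_filter.1 hj).2.not_ge (hmin j h)
  have hsub : ({j | v j < v i₀} : Finset ι) ⊆ ({k | v k ≤ v j} : Finset ι) := fun k hk =>
    mem_filter.2 ⟨mem_univ k, hjmax k hk⟩
  have := card_le_card hsub
  simp only [S, mem_filter, mem_univ, true_and, not_le] at hjS
  omega

theorem one_sub_pow_le_one_quarter {c : ℝ} {s : ℕ} (hc : c ≤ 1) (hcs : 2 ≤ c * s) :
    (1 - c) ^ s ≤ 1 / 4 := by
  have hexp2 : 4 ≤ Real.exp 2 := by
    nlinarith [Real.quadratic_le_exp_of_nonneg (zero_le_two : (0 : ℝ) ≤ 2)]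
  calc (1 - c) ^ s ≤ Real.exp (-c) ^ s :=
        pow_le_pow_left₀ (by linarith) (Real.one_sub_le_exp_neg c) s
    _ = Real.exp (-(c * s)) := by rw [← Real.exp_nat_mul]; ring_nf
    _ ≤ Real.exp (-2) := Real.exp_le_exp.2 (by linarith)
    _ ≤ 1 / 4 := by
        rw [Real.exp_neg, one_div]
        exact inv_anti₀ (by norm_num) hexp2

theorem card_filter_forall_notMem {ι α : Type*} [Fintype ι] [DecidableEq ι] [Fintype α]
    [DecidableEq α] (A : Finset α) :
    #{x : ι → α | ∀ i, x i ∉ A} = (Fintype.card α - #A) ^ Fintype.card ι := by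
  have : ({x : ι → α | ∀ i, x i ∉ A} : Finset (ι → α)) = Fintype.piFinset fun _ => Aᶜ := by
    ext x; simp
  rw [this, Fintype.card_piFinset, prod_const, card_compl, card_univ]

theorem le_card_filter_exists_mem {ι α : Type*} [Fintype ι] [DecidableEq ι] [Fintype α]
    [DecidableEq α] (A : Finset α) {δ : ℝ} (hA : δ * Fintype.card α ≤ #A) :
    (1 - (1 - δ) ^ Fintype.card ι) * (Fintype.card α : ℝ) ^ Fintype.card ι ≤
      #{x : ι → α | ∃ i, x i ∈ A} := by
  have hsplit := card_filter_add_card_filter_not (s := (univ : Finset (ι → α)))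
    (fun x => ∃ i, x i ∈ A)
  simp only [not_exists, card_univ, Fintype.card_fun] at hsplit
  rw [card_filter_forall_notMem] at hsplit
  have hmiss : ((Fintype.card α - #A : ℕ) : ℝ) ^ Fintype.card ι ≤
      ((1 - δ) * Fintype.card α) ^ Fintype.card ι := by
    rw [Nat.cast_sub (card_le_univ A)]
    exact pow_le_pow_left₀ (by simpa using card_le_univ A) (by linarith) _
  have hsplitR : ((#{x : ι → α | ∃ i, x i ∈ A} : ℕ) : ℝ) +
      ((Fintype.card α - #A : ℕ) : ℝ) ^ Fintype.card ι =
      (Fintype.card α : ℝ) ^ Fintype.card ι := by exact_mod_cast hsplit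
  rw [mul_pow] at hmiss
  linarith

theorem three_quarters_mul_le_card_filter_exists_mem {α : Type*} [Fintype α] [DecidableEq α]
    (A : Finset α) {c : ℝ} {s : ℕ} (hc : c ≤ 1) (hcs : 2 ≤ c * s)
    (hA : c * Fintype.card α ≤ #A) :
    3 / 4 * (Fintype.card α : ℝ) ^ s ≤ #{x : Fin s → α | ∃ i, x i ∈ A} := by
  have hmiss := le_card_filter_exists_mem (ι := Fin s) A hA
  rw [Fintype.card_fin] at hmiss
  -- `congr` identifies the `Fin`-specific decidability instance of `∃ i` with the generic one
  refine le_trans (mul_le_mul_of_nonneg_right ?_ (by positivity)) (hmiss.trans_eq (by congr))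
  linarith [one_sub_pow_le_one_quarter hc hcs]

theorem two_le_half_mul_ceil_four_div {γ : ℝ} (hγ : 0 < γ) : 2 ≤ γ / 2 * ⌈4 / γ⌉₊ := by
  have := mul_le_mul_of_nonneg_left (Nat.le_ceil (4 / γ)) hγ.le
  rw [mul_div_cancel₀ _ hγ.ne'] at this
  linarith

theorem card_le_two_mul_card_of_injective {ι α : Type*} [Fintype ι] {P : ι → Prop}
    [DecidablePred P] {g : ι → α} (hg : Function.Injective g) {A : Finset α}
    (hgA : ∀ i, P i → g i ∈ A) (hP : Fintype.card ι ≤ 2 * #{i | P i}) :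
    Fintype.card ι ≤ 2 * #A :=
  hP.trans <| Nat.mul_le_mul_left 2 <|
    card_le_card_of_injOn g (fun i hi => hgA i (mem_filter.1 hi).2) hg.injOn

theorem card_mul_card_le_ncard {α β : Type*} {G₁ : Finset α} {G₂ : Finset β} {S : Set (α × β)}
    (h : ∀ a ∈ G₁, ∀ b ∈ G₂, (a, b) ∈ S) (hS : S.Finite) : #G₁ * #G₂ ≤ S.ncard := by
  rw [← card_product, ← Set.ncard_coe_finset]
  exact Set.ncard_le_ncard (fun ab hab => h _ (mem_product.1 hab).1 _ (mem_product.1 hab).2) hS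

theorem stmt9_general (n d : ℕ)
    (f : (Fin d → Fin n) → ℝ) (γ : ℝ) (hγ0 : 0 < γ) (hγ1 : γ ≤ 1)
    (B B' : Finset (Fin d → Fin n))
    (N : ℕ) (hBcard : B.card = N) (hB'card : B'.card = N)
    (hBB' : ∀ p ∈ B, ∀ q ∈ B', gridLT p q)
    (K : ℕ) (p q : Fin K → Fin d → Fin n)
    (hp : Function.Injective p) (hq : Function.Injective q)
    (hpB : ∀ i, p i ∈ B) (hqB' : ∀ i, q i ∈ B')
    (hpq : ∀ i, f (p i) < f (q i))
    (hK : γ * (N : ℝ) ≤ (K : ℝ)) :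
    (1 / 2 : ℝ) * ((B.card : ℝ) ^ (⌈(4 : ℝ) / γ⌉₊) * (B'.card : ℝ) ^ (⌈(4 : ℝ) / γ⌉₊)) ≤
      (Set.ncard {xy : (Fin (⌈(4 : ℝ) / γ⌉₊) → ↥B) × (Fin (⌈(4 : ℝ) / γ⌉₊) → ↥B') |
        ∃ i j, f ((xy.1 i).val) < f ((xy.2 j).val) ∧
          gridLT ((xy.1 i).val) ((xy.2 j).val)} : ℝ) := by
  set s := ⌈(4 : ℝ) / γ⌉₊
  obtain ⟨t, hlow, hhigh⟩ := exists_median fun i => f (p i)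
  set L : Finset B := {b | f b ≤ t}
  set H : Finset B' := {b | t < f b}
  have hL : (K : ℝ) ≤ 2 * #L := mod_cast (Fintype.card_fin K).symm.trans_le <|
    card_le_two_mul_card_of_injective (g := fun i => (⟨p i, hpB i⟩ : B))
      (fun i j h => hp (congrArg Subtype.val h)) (fun i hi => by simpa [L] using hi) hlow
  have hH : (K : ℝ) ≤ 2 * #H := mod_cast (Fintype.card_fin K).symm.trans_le <|
    card_le_two_mul_card_of_injective (g := fun i => (⟨q i, hqB' i⟩ : B'))
      (fun i j h => hq (congrArg Subtype.val h))
      (fun i hi => by simpa [H] using hi.trans_lt (hpq i)) hhigh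
  have hG₁ := three_quarters_mul_le_card_filter_exists_mem L (by linarith)
    (two_le_half_mul_ceil_four_div hγ0) (by rw [Fintype.card_coe, hBcard]; linarith)
  have hG₂ := three_quarters_mul_le_card_filter_exists_mem H (by linarith)
    (two_le_half_mul_ceil_four_div hγ0) (by rw [Fintype.card_coe, hB'card]; linarith)
  rw [Fintype.card_coe] at hG₁ hG₂
  calc (1 / 2 : ℝ) * ((#B : ℝ) ^ s * (#B' : ℝ) ^ s)
      ≤ (3 / 4 * (#B : ℝ) ^ s) * (3 / 4 * (#B' : ℝ) ^ s) := by
        have : (0 : ℝ) ≤ (#B : ℝ) ^ s * (#B' : ℝ) ^ s := by positivity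
        linarith
    _ ≤ _ := mul_le_mul hG₁ hG₂ (by positivity) (by positivity)
    _ ≤ _ := by
        rw [← Nat.cast_mul, Nat.cast_le]
        refine card_mul_card_le_ncard (fun x hx y hy => ?_) (Set.toFinite _)
        obtain ⟨i, hi⟩ : ∃ i, f (x i) ≤ t := by simpa [L] using hx
        obtain ⟨j, hj⟩ : ∃ j, t < f (y j) := by simpa [H] using hy
        exact ⟨i, j, hi.trans_lt hj, hBB' _ (x i).2 _ (y j).2⟩

/-- (Median/sampling lemma.) Let `B, B'` be nonempty `N`-element subsets
of `[n]^d` with `p ≺ q` for all `p ∈ B, q ∈ B'`, and suppose there are `K ≥ γ·N` pairwise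
distinct points `p_i ∈ B` and `q_i ∈ B'` with `f(p_i) < f(q_i)`. If `⌈4/γ⌉` points are
sampled uniformly and independently from each of `B` and `B'`, then with probability at
least `1/2` some sampled pair `(p, q)` satisfies `f(p) < f(q)` (and `p ≺ q`), i.e. forms
a `(1,2)`-appearance. Probability is modeled by counting pairs of sample tuples. -/
theorem stmt9 (n d : ℕ) (hn : 1 ≤ n) (hd : 1 ≤ d)
    (f : (Fin d → Fin n) → ℝ) (γ : ℝ) (hγ0 : 0 < γ) (hγ1 : γ ≤ 1)
    (B B' : Finset (Fin d → Fin n)) (hB : B.Nonempty) (hB' : B'.Nonempty)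
    (N : ℕ) (hBcard : B.card = N) (hB'card : B'.card = N)
    (hBB' : ∀ p ∈ B, ∀ q ∈ B', gridLT p q)
    (K : ℕ) (p q : Fin K → Fin d → Fin n)
    (hp : Function.Injective p) (hq : Function.Injective q)
    (hpB : ∀ i, p i ∈ B) (hqB' : ∀ i, q i ∈ B')
    (hpq : ∀ i, f (p i) < f (q i))
    (hK : γ * (N : ℝ) ≤ (K : ℝ)) :
    (1 / 2 : ℝ) * ((B.card : ℝ) ^ (⌈(4 : ℝ) / γ⌉₊) * (B'.card : ℝ) ^ (⌈(4 : ℝ) / γ⌉₊)) ≤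
      (Set.ncard {xy : (Fin (⌈(4 : ℝ) / γ⌉₊) → ↥B) × (Fin (⌈(4 : ℝ) / γ⌉₊) → ↥B') |
        ∃ i j, f ((xy.1 i).val) < f ((xy.2 j).val) ∧
          gridLT ((xy.1 i).val) ((xy.2 j).val)} : ℝ) :=
  stmt9_general n d f γ hγ0 hγ1 B B' N hBcard hB'card hBB' K p q hp hq hpB hqB' hpq hK
end

section
/- Let ε ∈ (0,1) and set r = ⌈log₂(4/ε)⌉. Let B be a nonempty finite set, let w : B → [0,∞) satisfy Σ_{b ∈ B} w(b) = 1, and let e : B → [0,1] satisfy Σ_{b ∈ B} w(b)·e(b) ≥ ε/2. Then there exists k ∈ {1,…,2r} such that Σ_{b ∈ B : 2^{−k} < e(b) ≤ 2^{−k+1}} w(b) ≥ 2^k · ε / (16 r). -/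
/-!
A value `x ∈ (2^{-t}, 1]` lies in a dyadic level `(2^{-k}, 2^{-k+1}]` with `1 ≤ k ≤ t`, where
it is at most `2^{-k+1}`. Hence the weighted average of `e` is at most
`2^{-t} + Σ_k 2^{-k+1} W_k`, with `W_k` the weight of level `k`. For `t = 2r` the first term is
at most `ε/4`; if every `W_k` were below `2^k ε / (16 r)`, the sum would be below
`2r · ε / (8r) = ε/4`, contradicting the average `≥ ε/2`.
-/

open Finset

theorem exists_dyadic_level {x : ℝ} (hx : x ≤ 1) :
    ∀ {t : ℕ}, (2 : ℝ) ^ (-(t : ℤ)) < x →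
      ∃ k ∈ Icc 1 t, (2 : ℝ) ^ (-(k : ℤ)) < x ∧ x ≤ (2 : ℝ) ^ (-(k : ℤ) + 1)
  | 0, ht => by norm_num at ht; linarith
  | t + 1, ht => by
    by_cases hprev : (2 : ℝ) ^ (-(t : ℤ)) < x
    · obtain ⟨k, hk, hkx⟩ := exists_dyadic_level hx hprev
      exact ⟨k, Icc_subset_Icc_right t.le_succ hk, hkx⟩
    · refine ⟨t + 1, by simp, ht, ?_⟩
      push_cast
      simpa using not_lt.mp hprev

theorem le_dyadic_majorant {x : ℝ} (hx : x ≤ 1) (t : ℕ) :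
    x ≤ (2 : ℝ) ^ (-(t : ℤ)) + ∑ k ∈ Icc 1 t,
      if (2 : ℝ) ^ (-(k : ℤ)) < x ∧ x ≤ (2 : ℝ) ^ (-(k : ℤ) + 1)
      then (2 : ℝ) ^ (-(k : ℤ) + 1) else 0 := by
  have hterm_nonneg : ∀ k ∈ Icc 1 t, (0 : ℝ) ≤
      if (2 : ℝ) ^ (-(k : ℤ)) < x ∧ x ≤ (2 : ℝ) ^ (-(k : ℤ) + 1)
      then (2 : ℝ) ^ (-(k : ℤ) + 1) else 0 :=
    fun k _ => by split_ifs <;> positivity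
  by_cases hsmall : x ≤ (2 : ℝ) ^ (-(t : ℤ))
  · linarith [sum_nonneg hterm_nonneg]
  obtain ⟨k, hk, hlevel⟩ := exists_dyadic_level hx (not_le.mp hsmall)
  calc x ≤ (2 : ℝ) ^ (-(k : ℤ) + 1) := hlevel.2
    _ ≤ ∑ k ∈ Icc 1 t, _ := (if_pos hlevel).symm.le.trans (single_le_sum hterm_nonneg hk)
    _ ≤ _ := le_add_of_nonneg_left (by positivity)

theorem sum_mul_le_dyadic_levels {ι : Type*} (B : Finset ι) (w e : ι → ℝ)
    (hw : ∀ b ∈ B, 0 ≤ w b) (he : ∀ b ∈ B, e b ≤ 1) (t : ℕ) :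
    ∑ b ∈ B, w b * e b ≤ (2 : ℝ) ^ (-(t : ℤ)) * ∑ b ∈ B, w b + ∑ k ∈ Icc 1 t,
      (2 : ℝ) ^ (-(k : ℤ) + 1) * ∑ b ∈ B.filter (fun b =>
        (2 : ℝ) ^ (-(k : ℤ)) < e b ∧ e b ≤ (2 : ℝ) ^ (-(k : ℤ) + 1)), w b := by
  calc ∑ b ∈ B, w b * e b
      ≤ ∑ b ∈ B, w b * ((2 : ℝ) ^ (-(t : ℤ)) + ∑ k ∈ Icc 1 t,
          if (2 : ℝ) ^ (-(k : ℤ)) < e b ∧ e b ≤ (2 : ℝ) ^ (-(k : ℤ) + 1)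
          then (2 : ℝ) ^ (-(k : ℤ) + 1) else 0) :=
        sum_le_sum fun b hb =>
          mul_le_mul_of_nonneg_left (le_dyadic_majorant (he b hb) t) (hw b hb)
    _ = _ := by
      simp only [mul_add, sum_add_distrib, mul_sum, sum_filter, mul_ite, mul_zero]
      rw [sum_comm]
      simp only [mul_comm]

theorem two_zpow_neg_le_inv {y : ℝ} (hy : 0 < y) {t : ℕ} (ht : ⌈Real.logb 2 y⌉₊ ≤ t) :
    (2 : ℝ) ^ (-(t : ℤ)) ≤ y⁻¹ := by
  rw [zpow_neg, zpow_natCast]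
  refine inv_anti₀ hy ?_
  rw [← Real.rpow_natCast, ← Real.logb_le_iff_le_rpow one_lt_two hy]
  exact (Nat.le_ceil _).trans (by exact_mod_cast ht)

theorem two_zpow_neg_add_one_mul_lt {k : ℕ} {W c : ℝ} (hW : W < 2 ^ k * c) :
    (2 : ℝ) ^ (-(k : ℤ) + 1) * W < 2 * c := by
  have hscale : (2 : ℝ) ^ (-(k : ℤ) + 1) * 2 ^ k = 2 := by
    rw [zpow_add₀ two_ne_zero, zpow_neg, zpow_natCast, zpow_one]
    field_simp
  calc _ < (2 : ℝ) ^ (-(k : ℤ) + 1) * (2 ^ k * c) := mul_lt_mul_of_pos_left hW (by positivity)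
    _ = 2 * c := by rw [← mul_assoc, hscale]

open scoped Classical in
theorem stmt11_general {α : Type*} (ε : ℝ) (hε0 : 0 < ε) (hε1 : ε < 1)
    (B : Finset α)
    (w e : α → ℝ)
    (hw0 : ∀ b ∈ B, 0 ≤ w b) (hw1 : ∑ b ∈ B, w b = 1)
    (he : ∀ b ∈ B, 0 ≤ e b ∧ e b ≤ 1)
    (havg : ε / 2 ≤ ∑ b ∈ B, w b * e b) :
    ∃ k : ℕ, 1 ≤ k ∧ k ≤ 2 * ⌈Real.logb 2 (4 / ε)⌉₊ ∧
      2 ^ k * ε / (16 * (⌈Real.logb 2 (4 / ε)⌉₊ : ℝ)) ≤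
        ∑ b ∈ B.filter
          (fun b => (2 : ℝ) ^ (-(k : ℤ)) < e b ∧ e b ≤ (2 : ℝ) ^ (-(k : ℤ) + 1)), w b := by
  set r := ⌈Real.logb 2 (4 / ε)⌉₊
  have hr : 1 ≤ r := Nat.one_le_ceil_iff.mpr <|
    Real.logb_pos one_lt_two ((one_lt_div hε0).mpr (by linarith))
  have htail : (2 : ℝ) ^ (-((2 * r : ℕ) : ℤ)) ≤ ε / 4 :=
    (two_zpow_neg_le_inv (by positivity) (by omega)).trans_eq (inv_div 4 ε)
  by_contra! hcon
  have hlevels : ∑ k ∈ Icc 1 (2 * r), (2 : ℝ) ^ (-(k : ℤ) + 1) * ∑ b ∈ B.filter (fun b =>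
      (2 : ℝ) ^ (-(k : ℤ)) < e b ∧ e b ≤ (2 : ℝ) ^ (-(k : ℤ) + 1)), w b < ε / 4 :=
    calc _ < ∑ k ∈ Icc 1 (2 * r), 2 * (ε / (16 * r)) :=
          sum_lt_sum_of_nonempty ⟨1, by simp; omega⟩ fun k hk =>
            two_zpow_neg_add_one_mul_lt <| by
              rw [← mul_div_assoc]
              exact hcon k (mem_Icc.mp hk).1 (mem_Icc.mp hk).2
      _ = ε / 4 := by
          rw [sum_const, Nat.card_Icc, nsmul_eq_mul]
          push_cast
          field_simp
          ring
  have hbound := sum_mul_le_dyadic_levels B w e hw0 (fun b hb => (he b hb).2) (2 * r)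
  rw [hw1, mul_one] at hbound
  linarith

open scoped Classical in
/-- (Dyadic pigeonhole.) Let `ε ∈ (0,1)`, `r = ⌈log₂(4/ε)⌉`. If `w` is
a probability weighting of a nonempty finite set `B` and `e : B → [0,1]` has weighted
average at least `ε/2`, then some dyadic level `k ∈ {1,…,2r}` satisfies
`Σ_{b : 2^{−k} < e(b) ≤ 2^{−k+1}} w(b) ≥ 2^k · ε / (16 r)`. -/
theorem stmt11 {α : Type*} (ε : ℝ) (hε0 : 0 < ε) (hε1 : ε < 1)
    (B : Finset α) (hB : B.Nonempty)
    (w e : α → ℝ)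
    (hw0 : ∀ b ∈ B, 0 ≤ w b) (hw1 : ∑ b ∈ B, w b = 1)
    (he : ∀ b ∈ B, 0 ≤ e b ∧ e b ≤ 1)
    (havg : ε / 2 ≤ ∑ b ∈ B, w b * e b) :
    ∃ k : ℕ, 1 ≤ k ∧ k ≤ 2 * ⌈Real.logb 2 (4 / ε)⌉₊ ∧
      2 ^ k * ε / (16 * (⌈Real.logb 2 (4 / ε)⌉₊ : ℝ)) ≤
        ∑ b ∈ B.filter
          (fun b => (2 : ℝ) ^ (-(k : ℤ)) < e b ∧ e b ≤ (2 : ℝ) ^ (-(k : ℤ) + 1)), w b :=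
  stmt11_general ε hε0 hε1 B w e hw0 hw1 he havg
end

section
/- Let n ≥ 1, let X : [3n]² → {0,1}, let S ⊆ [2n]², and let k = (k₁,k₂) ∈ [n]². Define A, B : [3n]² → ℤ as follows. For i = (i₁,i₂) ∈ [3n]², A(i) = 6n(i₁+i₂) + 2i₁ + X(i). For j = (j₁,j₂) ∈ [3n]², writing j' = (j₁−k₁, j₂−k₂): B(j) = 6n(j₁'+j₂') + 2j₁' + X(j') if j' ∈ S; B(j) = 6n(j₁'+j₂') + 2j₁' + (1 − X(j')) if j' ∈ [3n]² ∖ S; and B(j) = 6n(j₁'+j₂') + 2j₁' if j' ∉ [3n]². Then: (i) A and B are each injective and strictly monotone with respect to the coordinatewise partial order (i ≺ j and i ≠ j imply A(i) < A(j) and B(i) < B(j)); and (ii) for all i, j ∈ [3n]², A(i) = B(j) if and only if i ∈ S and j = i + k (coordinatewise addition). -/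
/-!
Every value of `A` and `B` is a code `6n(a + b) + 2a + e` of a point `(a, b)` and a bit `e`:
`A i` codes `(i, X i)` and `B j` codes `(j - k, e)`, where for `j - k ∈ [3n]²` the bit `e` equals
`X (j - k)` exactly when `j - k ∈ S`. If `q - p < 3n` in both coordinates, two codes of `p` and `q`
can only agree when the levels `a + b` agree, since a nonzero multiple of `6n` cannot be absorbed
by the difference of the terms `2a + e`; then `2a + e` determines `a` and `e`. So `A i = B j`
forces `i = j - k` and `X i = e`, that is `i ∈ S`. Monotonicity holds because the level dominates.
-/

/-- `p` lies in the grid `[m]²` (coordinates in `ℤ`). -/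
def inGrid (m : ℤ) (p : ℤ × ℤ) : Prop :=
  1 ≤ p.1 ∧ p.1 ≤ m ∧ 1 ≤ p.2 ∧ p.2 ≤ m

theorem inGrid.sub_lt {m : ℤ} {p q : ℤ × ℤ} (hp : inGrid m p) (hq : inGrid m q) :
    q.1 - p.1 < m ∧ q.2 - p.2 < m := by
  obtain ⟨hp1, -, hp2, -⟩ := hp
  obtain ⟨-, hq1, -, hq2⟩ := hq
  omega

theorem inGrid.mono {m m' : ℤ} {p : ℤ × ℤ} (h : m ≤ m') (hp : inGrid m p) : inGrid m' p :=
  ⟨hp.1, hp.2.1.trans h, hp.2.2.1, hp.2.2.2.trans h⟩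

def gridCode (n : ℤ) (p : ℤ × ℤ) (e : ℤ) : ℤ :=
  6 * n * (p.1 + p.2) + 2 * p.1 + e

section gridCode

variable {n e f : ℤ} {p q : ℤ × ℤ}

theorem eq_and_eq_of_gridCode_eq (hn : 0 < n) (he : e = 0 ∨ e = 1) (hf : f = 0 ∨ f = 1)
    (hqp : q.1 - p.1 < 3 * n ∧ q.2 - p.2 < 3 * n)
    (h : gridCode n p e = gridCode n q f) : p = q ∧ e = f := by
  unfold gridCode at h
  set s := p.1 + p.2 - (q.1 + q.2)
  have hlevel : 6 * n * s = 2 * (q.1 - p.1) + f - e := by linear_combination h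
  have hs0 : s = 0 := by
    rcases lt_trichotomy s 0 with hneg | hzero | hpos
    · have : 6 * n * s ≤ 6 * n * (-1) := mul_le_mul_of_nonneg_left (by omega) (by omega)
      omega
    · exact hzero
    · have : 6 * n * 1 ≤ 6 * n * s := mul_le_mul_of_nonneg_left (by omega) (by omega)
      omega
  rw [hs0, mul_zero] at hlevel
  exact ⟨Prod.ext (by omega) (by omega), by omega⟩

theorem gridCode_lt_gridCode (hn : 0 < n) (he : e = 0 ∨ e = 1) (hf : f = 0 ∨ f = 1)
    (hpq : p < q) : gridCode n p e < gridCode n q f := by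
  have hstep : 1 ≤ q.1 + q.2 - (p.1 + p.2) ∧ p.1 ≤ q.1 := by
    rcases Prod.lt_iff.mp hpq with h | h <;> omega
  have : 6 * n * 1 ≤ 6 * n * (q.1 + q.2 - (p.1 + p.2)) :=
    mul_le_mul_of_nonneg_left hstep.1 (by omega)
  unfold gridCode
  have : e ≤ 1 ∧ 0 ≤ f := by omega
  linarith

theorem injOn_gridCode_sub (hn : 0 < n) {b : ℤ × ℤ → ℤ}
    (hb : ∀ p, inGrid (3 * n) p → b p = 0 ∨ b p = 1) (v : ℤ × ℤ) :
    Set.InjOn (fun p ↦ gridCode n (p - v) (b p)) {p | inGrid (3 * n) p} := by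
  intro p hp q hq h
  have hqp : (q - v).1 - (p - v).1 < 3 * n ∧ (q - v).2 - (p - v).2 < 3 * n := by
    simpa only [Prod.fst_sub, Prod.snd_sub, sub_sub_sub_cancel_right] using hp.sub_lt hq
  exact sub_left_inj.mp (eq_and_eq_of_gridCode_eq hn (hb p hp) (hb q hq) hqp h).1

theorem strictMonoOn_gridCode_sub {s : Set (ℤ × ℤ)} (hn : 0 < n) {b : ℤ × ℤ → ℤ}
    (hb : ∀ p ∈ s, b p = 0 ∨ b p = 1) (v : ℤ × ℤ) :
    StrictMonoOn (fun p ↦ gridCode n (p - v) (b p)) s :=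
  fun p hp q hq hpq ↦ gridCode_lt_gridCode hn (hb p hp) (hb q hq) (sub_lt_sub_right hpq v)

end gridCode

open Classical in
/-- The bit carried by `B (p + k)`. -/
noncomputable def maskedBit (X : ℤ × ℤ → ℤ) (S : Set (ℤ × ℤ)) (m : ℤ) (p : ℤ × ℤ) : ℤ :=
  if p ∈ S then X p else if inGrid m p then 1 - X p else 0

section maskedBit

variable {X : ℤ × ℤ → ℤ} {S : Set (ℤ × ℤ)} {m : ℤ}

theorem maskedBit_eq_zero_or_one (hX : ∀ p, inGrid m p → X p = 0 ∨ X p = 1)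
    (hS : ∀ p ∈ S, inGrid m p) (p : ℤ × ℤ) : maskedBit X S m p = 0 ∨ maskedBit X S m p = 1 := by
  unfold maskedBit
  split_ifs with hpS hp
  · exact hX p (hS p hpS)
  · have := hX p hp
    omega
  · exact Or.inl rfl

theorem maskedBit_eq_iff {p : ℤ × ℤ} (hp : inGrid m p) : maskedBit X S m p = X p ↔ p ∈ S := by
  unfold maskedBit
  split_ifs with hpS
  · exact iff_of_true rfl hpS
  · exact iff_of_false (by omega) hpS

theorem gridCode_eq_gridCode_maskedBit_iff {n : ℤ} {i j k : ℤ × ℤ} (hn : 0 < n)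
    (hX : ∀ p, inGrid (3 * n) p → X p = 0 ∨ X p = 1) (hS : ∀ p ∈ S, inGrid (3 * n) p)
    (hk : 0 ≤ k) (hi : inGrid (3 * n) i) (hj : inGrid (3 * n) j) :
    gridCode n i (X i) = gridCode n (j - k) (maskedBit X S (3 * n) (j - k)) ↔
      i ∈ S ∧ j = i + k := by
  constructor
  · intro h
    have hji : (j - k).1 - i.1 < 3 * n ∧ (j - k).2 - i.2 < 3 * n := by
      obtain ⟨hk1, hk2⟩ := Prod.le_def.mp hk
      obtain ⟨hi1, -, hi2, -⟩ := hi
      obtain ⟨-, hj1, -, hj2⟩ := hj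
      simp only [Prod.fst_sub, Prod.snd_sub, Prod.fst_zero, Prod.snd_zero] at *
      omega
    obtain ⟨rfl, hXb⟩ :=
      eq_and_eq_of_gridCode_eq hn (hX i hi) (maskedBit_eq_zero_or_one hX hS _) hji h
    exact ⟨(maskedBit_eq_iff hi).mp hXb.symm, (sub_add_cancel j k).symm⟩
  · rintro ⟨hiS, rfl⟩
    rw [add_sub_cancel_right, (maskedBit_eq_iff hi).mpr hiS]

end maskedBit

/-- (Hard distribution for the nonadaptive intersection-search lower
bound.) Given `X : [3n]² → {0,1}`, `S ⊆ [2n]²`, `k ∈ [n]²`, and arrays `A, B` defined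
as in the construction, (i) `A` and `B` are injective and strictly monotone on `[3n]²`
with respect to the coordinatewise partial order, and (ii) for `i, j ∈ [3n]²`,
`A(i) = B(j)` iff `i ∈ S` and `j = i + k`. -/
theorem stmt13 (n : ℕ) (hn : 1 ≤ n)
    (X : ℤ × ℤ → ℤ) (hX : ∀ p, inGrid (3 * n) p → X p = 0 ∨ X p = 1)
    (S : Set (ℤ × ℤ)) (hS : ∀ p ∈ S, inGrid (2 * n) p)
    (k : ℤ × ℤ) (hk : inGrid n k)
    (A B : ℤ × ℤ → ℤ)
    (hA : ∀ p, inGrid (3 * n) p → A p = 6 * n * (p.1 + p.2) + 2 * p.1 + X p)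
    (hB1 : ∀ p, inGrid (3 * n) p → p - k ∈ S →
      B p = 6 * n * ((p.1 - k.1) + (p.2 - k.2)) + 2 * (p.1 - k.1) + X (p - k))
    (hB2 : ∀ p, inGrid (3 * n) p → p - k ∉ S → inGrid (3 * n) (p - k) →
      B p = 6 * n * ((p.1 - k.1) + (p.2 - k.2)) + 2 * (p.1 - k.1) + (1 - X (p - k)))
    (hB3 : ∀ p, inGrid (3 * n) p → ¬ inGrid (3 * n) (p - k) →
      B p = 6 * n * ((p.1 - k.1) + (p.2 - k.2)) + 2 * (p.1 - k.1)) :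
    (Set.InjOn A {p | inGrid (3 * n) p} ∧ Set.InjOn B {p | inGrid (3 * n) p} ∧
      (∀ p q, inGrid (3 * n) p → inGrid (3 * n) q →
        p.1 ≤ q.1 → p.2 ≤ q.2 → p ≠ q → A p < A q ∧ B p < B q)) ∧
    (∀ i j, inGrid (3 * n) i → inGrid (3 * n) j →
      (A i = B j ↔ i ∈ S ∧ j = i + k)) := by
  have hn' : (0 : ℤ) < n := by exact_mod_cast hn
  have hS' : ∀ p ∈ S, inGrid (3 * n) p := fun p hp ↦ (hS p hp).mono (by omega)
  have hk' : 0 ≤ k := Prod.le_def.mpr ⟨zero_le_one.trans hk.1, zero_le_one.trans hk.2.2.1⟩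
  set grid := {p | inGrid (3 * n) p}
  have hbB : ∀ p ∈ grid, maskedBit X S (3 * n) (p - k) = 0 ∨ maskedBit X S (3 * n) (p - k) = 1 :=
    fun p _ ↦ maskedBit_eq_zero_or_one hX hS' _
  have hA' : Set.EqOn A (fun p ↦ gridCode n (p - 0) (X p)) grid := fun p hp ↦ by
    simp [hA p hp, gridCode]
  have hB' : Set.EqOn B (fun p ↦ gridCode n (p - k) (maskedBit X S (3 * n) (p - k))) grid := by
    intro p hp
    dsimp only [maskedBit]
    split_ifs with hpS hpk
    exacts [hB1 p hp hpS, hB2 p hp hpS hpk, by simp [hB3 p hp hpk, gridCode]]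
  refine ⟨⟨(injOn_gridCode_sub hn' hX 0).congr hA'.symm,
    (injOn_gridCode_sub hn' hbB k).congr hB'.symm, fun p q hp hq h1 h2 hne ↦ ?_⟩,
    fun i j hi hj ↦ ?_⟩
  · have hpq : p < q := lt_of_le_of_ne (Prod.le_def.mpr ⟨h1, h2⟩) hne
    rw [hA' hp, hA' hq, hB' hp, hB' hq]
    exact ⟨strictMonoOn_gridCode_sub hn' hX 0 hp hq hpq,
      strictMonoOn_gridCode_sub hn' hbB k hp hq hpq⟩
  rw [hA' hi, hB' hj]
  simpa only [sub_zero] using gridCode_eq_gridCode_maskedBit_iff hn' hX hS' hk' hi hj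
end

section
/- Let n ≥ 1, and for each r ∈ {n+2,…,3n+1} let π_r be a permutation of [r−1]. Define A, B : [3n]² → ℤ by: A(i₁,i₂) = 6n(i₁+i₂) + 2i₁ for all (i₁,i₂) ∈ [3n]²; and B(i₁,i₂) = 6n(i₁+i₂) + 2·π_r(i₁) if r := i₁+i₂ ∈ {n+2,…,3n+1} (note that 1 ≤ i₁ ≤ r−1 in this case, so π_r(i₁) is defined), while B(i₁,i₂) = 6n(i₁+i₂) + 2i₁ + 1 otherwise. Then: (i) A and B are each injective and strictly monotone with respect to the coordinatewise partial order; (ii) |A([3n]²) ∩ B([3n]²)| = 4n² + n; and (iii) whenever A(i) = B(j) for i, j ∈ [3n]², one has i₁+i₂ = j₁+j₂ ∈ {n+2,…,3n+1} and i₁ = π_{j₁+j₂}(j₁), so every common value of A and B lies on a single antichain {(x₁,x₂) ∈ [3n]² : x₁+x₂ = r} in both arrays. -/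
/-- `p` lies in the grid `[m]²` (coordinates in `ℕ`). -/
def inGridN (m : ℕ) (p : ℕ × ℕ) : Prop :=
  1 ≤ p.1 ∧ p.1 ≤ m ∧ 1 ≤ p.2 ∧ p.2 ≤ m

/-- Decoding lemma: the representation `6n·s + t` with `2 ≤ t ≤ 6n+1` is unique. -/
lemma decode_aux {n s s' t t' : ℕ} (hn : 1 ≤ n) (ht : 2 ≤ t) (ht6 : t ≤ 6 * n + 1)
    (ht' : 2 ≤ t') (ht6' : t' ≤ 6 * n + 1)
    (h : 6 * n * s + t = 6 * n * s' + t') : s = s' ∧ t = t' := by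
  rcases lt_trichotomy s s' with h1 | h1 | h1
  · exfalso
    have h2 : 6 * n * (s + 1) ≤ 6 * n * s' := Nat.mul_le_mul_left _ h1
    have h3 : 6 * n * (s + 1) = 6 * n * s + 6 * n := by ring
    omega
  · subst h1
    exact ⟨rfl, Nat.add_left_cancel h⟩
  · exfalso
    have h2 : 6 * n * (s' + 1) ≤ 6 * n * s := Nat.mul_le_mul_left _ h1
    have h3 : 6 * n * (s' + 1) = 6 * n * s' + 6 * n := by ring
    omega

/-- Gauss-type sum used for the cardinality count. -/
lemma sum_helper (n : ℕ) :
    (∑ s ∈ Finset.Icc (n + 2) (3 * n + 1), (s - 1)) = 4 * n ^ 2 + n := by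
  have key : ∀ m : ℕ, (∑ i ∈ Finset.Ioc 0 m, i) * 2 = (m + 1) * m := by
    intro m
    have h0 : Finset.range (m + 1) = insert 0 (Finset.Ioc 0 m) := by
      ext x; simp [Finset.mem_range, Finset.mem_Ioc]
    have h1 := Finset.sum_range_id_mul_two (m + 1)
    rw [h0, Finset.sum_insert (by simp)] at h1
    simpa using h1
  have h1 : (∑ s ∈ Finset.Icc (n + 2) (3 * n + 1), (s - 1))
      = ∑ s ∈ Finset.Icc (n + 1) (3 * n), s := by
    rw [show Finset.Icc (n + 2) (3 * n + 1)
        = Finset.map (addRightEmbedding 1) (Finset.Icc (n + 1) (3 * n)) from by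
      rw [Finset.map_add_right_Icc], Finset.sum_map]
    simp [addRightEmbedding]
  have h2 : Finset.Icc (n + 1) (3 * n) = Finset.Ioc n (3 * n) := Finset.Icc_add_one_left_eq_Ioc n (3 * n)
  have h3 := Finset.sum_Ioc_consecutive (id : ℕ → ℕ) (Nat.zero_le n)
    (by omega : n ≤ 3 * n)
  simp only [id_eq] at h3
  have k1 := key n
  have k2 := key (3 * n)
  have hsq : n ^ 2 = n * n := sq n
  rw [h1, h2]
  nlinarith [k1, k2, h3]

/-- (Hard distribution for the adaptive intersection-search lower
bound.) Given, for each `r ∈ {n+2,…,3n+1}`, a permutation `π_r` of `[r−1]`, and arrays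
`A, B` defined as in the construction: (i) `A` and `B` are injective and strictly
monotone on `[3n]²`; (ii) `A` and `B` have exactly `4n² + n` common values; and
(iii) whenever `A(i) = B(j)`, one has `i₁+i₂ = j₁+j₂ ∈ {n+2,…,3n+1}` and
`i₁ = π_{j₁+j₂}(j₁)`, so every common value lies on a single antichain. -/
theorem stmt14 (n : ℕ) (hn : 1 ≤ n)
    (π : ℕ → ℕ → ℕ)
    (hπ : ∀ r, n + 2 ≤ r → r ≤ 3 * n + 1 →
      Set.BijOn (π r) (Set.Icc 1 (r - 1)) (Set.Icc 1 (r - 1)))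
    (A B : ℕ × ℕ → ℕ)
    (hA : ∀ p, A p = 6 * n * (p.1 + p.2) + 2 * p.1)
    (hB : ∀ p, B p =
      if n + 2 ≤ p.1 + p.2 ∧ p.1 + p.2 ≤ 3 * n + 1 then
        6 * n * (p.1 + p.2) + 2 * π (p.1 + p.2) p.1
      else 6 * n * (p.1 + p.2) + 2 * p.1 + 1) :
    (Set.InjOn A {p | inGridN (3 * n) p} ∧ Set.InjOn B {p | inGridN (3 * n) p} ∧
      (∀ p q, inGridN (3 * n) p → inGridN (3 * n) q →
        p.1 ≤ q.1 → p.2 ≤ q.2 → p ≠ q → A p < A q ∧ B p < B q)) ∧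
    (A '' {p | inGridN (3 * n) p} ∩ B '' {p | inGridN (3 * n) p}).ncard = 4 * n ^ 2 + n ∧
    (∀ i j, inGridN (3 * n) i → inGridN (3 * n) j → A i = B j →
      i.1 + i.2 = j.1 + j.2 ∧ n + 2 ≤ i.1 + i.2 ∧ i.1 + i.2 ≤ 3 * n + 1 ∧
        i.1 = π (j.1 + j.2) j.1) := by
  -- Normal form of B on the grid.
  have hBform : ∀ p : ℕ × ℕ, inGridN (3 * n) p →
      ∃ t, B p = 6 * n * (p.1 + p.2) + t ∧ 2 ≤ t ∧ t ≤ 6 * n + 1 ∧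
        ((n + 2 ≤ p.1 + p.2 ∧ p.1 + p.2 ≤ 3 * n + 1) →
          t = 2 * π (p.1 + p.2) p.1 ∧
            1 ≤ π (p.1 + p.2) p.1 ∧ π (p.1 + p.2) p.1 ≤ p.1 + p.2 - 1) ∧
        (¬(n + 2 ≤ p.1 + p.2 ∧ p.1 + p.2 ≤ 3 * n + 1) → t = 2 * p.1 + 1) := by
    intro p hp
    obtain ⟨hp1, hp1', hp2, hp2'⟩ := hp
    rw [hB]
    by_cases hc : n + 2 ≤ p.1 + p.2 ∧ p.1 + p.2 ≤ 3 * n + 1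
    · have hmem : π (p.1 + p.2) p.1 ∈ Set.Icc 1 (p.1 + p.2 - 1) :=
        (hπ _ hc.1 hc.2).mapsTo ⟨hp1, by omega⟩
      obtain ⟨hπ1, hπ2⟩ := hmem
      refine ⟨2 * π (p.1 + p.2) p.1, ?_, by omega, by omega,
        fun _ => ⟨rfl, hπ1, hπ2⟩, fun h => absurd hc h⟩
      rw [if_pos hc]
    · refine ⟨2 * p.1 + 1, ?_, by omega, by omega, fun h => absurd h hc, fun _ => rfl⟩
      rw [if_neg hc, Nat.add_assoc]
  -- Part (iii): structure of common values.
  have hAB : ∀ i j : ℕ × ℕ, inGridN (3 * n) i → inGridN (3 * n) j → A i = B j →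
      i.1 + i.2 = j.1 + j.2 ∧ n + 2 ≤ j.1 + j.2 ∧ j.1 + j.2 ≤ 3 * n + 1 ∧
        i.1 = π (j.1 + j.2) j.1 := by
    intro i j hi hj h
    obtain ⟨hi1, hi1', hi2, hi2'⟩ := hi
    obtain ⟨t, hBt, ht2, ht6, hin, hout⟩ := hBform j hj
    rw [hA, hBt] at h
    have hd := decode_aux hn (by omega : 2 ≤ 2 * i.1) (by omega) ht2 ht6 h
    by_cases hc : n + 2 ≤ j.1 + j.2 ∧ j.1 + j.2 ≤ 3 * n + 1
    · obtain ⟨htv, _, _⟩ := hin hc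
      exact ⟨hd.1, hc.1, hc.2, by omega⟩
    · have := hout hc
      omega
  -- Injectivity of A.
  have hInjA : Set.InjOn A {p | inGridN (3 * n) p} := by
    intro p hp q hq h
    obtain ⟨hp1, hp1', hp2, hp2'⟩ := hp
    obtain ⟨hq1, hq1', hq2, hq2'⟩ := hq
    rw [hA, hA] at h
    have hd := decode_aux hn (by omega : 2 ≤ 2 * p.1) (by omega)
      (by omega : 2 ≤ 2 * q.1) (by omega) h
    have : p.1 = q.1 ∧ p.2 = q.2 := by omega
    exact Prod.ext this.1 this.2
  -- Injectivity of B.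
  have hInjB : Set.InjOn B {p | inGridN (3 * n) p} := by
    intro p hp q hq h
    obtain ⟨tp, hBp, htp2, htp6, hinp, houtp⟩ := hBform p hp
    obtain ⟨tq, hBq, htq2, htq6, hinq, houtq⟩ := hBform q hq
    obtain ⟨hp1, hp1', hp2, hp2'⟩ := hp
    obtain ⟨hq1, hq1', hq2, hq2'⟩ := hq
    rw [hBp, hBq] at h
    have hd := decode_aux hn htp2 htp6 htq2 htq6 h
    have hs : p.1 + p.2 = q.1 + q.2 := hd.1
    by_cases hc : n + 2 ≤ p.1 + p.2 ∧ p.1 + p.2 ≤ 3 * n + 1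
    · obtain ⟨htv, _, _⟩ := hinp hc
      obtain ⟨htv', _, _⟩ := hinq (by omega)
      have hππ : π (p.1 + p.2) p.1 = π (p.1 + p.2) q.1 := by rw [hs] at htv ⊢; omega
      have heq : p.1 = q.1 := (hπ _ hc.1 hc.2).injOn ⟨hp1, by omega⟩
        ⟨hq1, by omega⟩ (by rw [hππ, hs])
      exact Prod.ext heq (by omega)
    · have h1 := houtp hc
      have h2 := houtq (by omega)
      have : p.1 = q.1 := by omega
      exact Prod.ext this (by omega)
  -- Strict monotonicity.
  have hMono : ∀ p q : ℕ × ℕ, inGridN (3 * n) p → inGridN (3 * n) q →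
      p.1 ≤ q.1 → p.2 ≤ q.2 → p ≠ q → A p < A q ∧ B p < B q := by
    intro p q hp hq h1 h2 hne
    obtain ⟨tp, hBp, htp2, htp6, _, _⟩ := hBform p hp
    obtain ⟨tq, hBq, htq2, htq6, _, _⟩ := hBform q hq
    obtain ⟨hp1, hp1', hp2, hp2'⟩ := hp
    obtain ⟨hq1, hq1', hq2, hq2'⟩ := hq
    have hne' : p.1 ≠ q.1 ∨ p.2 ≠ q.2 := by
      by_contra hcon
      push_neg at hcon
      exact hne (Prod.ext hcon.1 hcon.2)
    have hs : p.1 + p.2 + 1 ≤ q.1 + q.2 := by omega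
    have hmul : 6 * n * (p.1 + p.2) + 6 * n ≤ 6 * n * (q.1 + q.2) := by
      calc 6 * n * (p.1 + p.2) + 6 * n = 6 * n * (p.1 + p.2 + 1) := by ring
        _ ≤ 6 * n * (q.1 + q.2) := Nat.mul_le_mul_left _ hs
    constructor
    · rw [hA, hA]; omega
    · rw [hBp, hBq]; omega
  refine ⟨⟨hInjA, hInjB, hMono⟩, ?_, ?_⟩
  · -- Cardinality of the intersection.
    set F : Finset ℕ := (Finset.Icc (n + 2) (3 * n + 1)).biUnion
      (fun s => (Finset.Icc 1 (s - 1)).image (fun t => 6 * n * s + 2 * t)) with hF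
    have hset : A '' {p | inGridN (3 * n) p} ∩ B '' {p | inGridN (3 * n) p} = ↑F := by
      ext v
      constructor
      · rintro ⟨⟨i, hi, rfl⟩, ⟨j, hj, hBj⟩⟩
        obtain ⟨hsum, hr1, hr2, hi1⟩ := hAB i j hi hj hBj.symm
        obtain ⟨hgi1, hgi1', hgi2, hgi2'⟩ := hi
        rw [Finset.coe_biUnion]
        simp only [Set.mem_iUnion, Finset.coe_image, Set.mem_image, Finset.mem_coe,
          Finset.mem_Icc]
        exact ⟨i.1 + i.2, ⟨by omega, by omega⟩, i.1, ⟨by omega, by omega⟩, (hA i).symm⟩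
      · intro hv
        rw [Finset.mem_coe, Finset.mem_biUnion] at hv
        obtain ⟨s, hs, hv⟩ := hv
        rw [Finset.mem_image] at hv
        obtain ⟨t, ht, rfl⟩ := hv
        rw [Finset.mem_Icc] at hs ht
        constructor
        · refine ⟨(t, s - t), ⟨by omega, by omega, by omega, by omega⟩, ?_⟩
          rw [hA]
          simp only
          have : t + (s - t) = s := by omega
          rw [this]
        · obtain ⟨u, hu, hut⟩ := (hπ s hs.1 hs.2).surjOn
            (⟨ht.1, ht.2⟩ : t ∈ Set.Icc 1 (s - 1))
          obtain ⟨hu1, hu2⟩ := hu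
          refine ⟨(u, s - u), ⟨by omega, by omega, by omega, by omega⟩, ?_⟩
          rw [hB]
          simp only
          have hsum : u + (s - u) = s := by omega
          rw [hsum, if_pos ⟨hs.1, hs.2⟩, hut]
    rw [hset, Set.ncard_coe_finset]
    have hdisj : ∀ s ∈ Finset.Icc (n + 2) (3 * n + 1),
        ∀ s' ∈ Finset.Icc (n + 2) (3 * n + 1), s ≠ s' →
        Disjoint ((Finset.Icc 1 (s - 1)).image (fun t => 6 * n * s + 2 * t))
          ((Finset.Icc 1 (s' - 1)).image (fun t => 6 * n * s' + 2 * t)) := by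
      intro s hs s' hs' hne
      rw [Finset.mem_Icc] at hs hs'
      rw [Finset.disjoint_left]
      intro v hv hv'
      rw [Finset.mem_image] at hv hv'
      obtain ⟨t, ht, rfl⟩ := hv
      obtain ⟨t', ht', heq⟩ := hv'
      rw [Finset.mem_Icc] at ht ht'
      exact hne (decode_aux hn (by omega : 2 ≤ 2 * t') (by omega)
        (by omega : 2 ≤ 2 * t) (by omega) heq).1.symm
    rw [hF, Finset.card_biUnion hdisj]
    have : ∀ s ∈ Finset.Icc (n + 2) (3 * n + 1),
        ((Finset.Icc 1 (s - 1)).image (fun t => 6 * n * s + 2 * t)).card = s - 1 := by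
      intro s _
      rw [Finset.card_image_of_injective _ (fun a b hab => by omega), Nat.card_Icc]
      omega
    rw [Finset.sum_congr rfl this, sum_helper]
  · -- Part (iii).
    intro i j hi hj h
    obtain ⟨hsum, hr1, hr2, hi1⟩ := hAB i j hi hj h
    exact ⟨hsum, by omega, by omega, hi1⟩
end

section
/- There exist a constant c > 0 and an integer n₀ such that for every n ≥ n₀ there exists a function f : [n]² → ℝ whose deletion distance from (1,2,3)-fork-freeness is at most 1 and whose Hamming distance from (1,2,3)-fork-freeness is at least c·n. -/
/-- `f` restricted to `A` contains a `(1,2,3)`-fork appearance: points `p₁, p₂, p₃` with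
`p₂ ≺ p₁`, `p₂ ≺ p₃`, `p₁` and `p₃` incomparable, and `f(p₁) < f(p₂) < f(p₃)`. -/
def ForkAppearanceOn {n : ℕ} (f : (Fin 2 → Fin n) → ℝ) (A : Set (Fin 2 → Fin n)) : Prop :=
  ∃ p₁ p₂ p₃ : Fin 2 → Fin n, p₁ ∈ A ∧ p₂ ∈ A ∧ p₃ ∈ A ∧
    gridLT p₂ p₁ ∧ gridLT p₂ p₃ ∧ ¬ gridLE p₁ p₃ ∧ ¬ gridLE p₃ p₁ ∧
    f p₁ < f p₂ ∧ f p₂ < f p₃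

/-- `f` is `(1,2,3)`-fork-free. -/
def ForkFree {n : ℕ} (f : (Fin 2 → Fin n) → ℝ) : Prop :=
  ¬ ForkAppearanceOn f Set.univ

/-- The deletion distance of `f` from `(1,2,3)`-fork-freeness. -/
noncomputable def forkDeletionDist {n : ℕ} (f : (Fin 2 → Fin n) → ℝ) : ℕ :=
  sInf {s : ℕ | ∃ S : Set (Fin 2 → Fin n), S.ncard = s ∧ ¬ ForkAppearanceOn f Sᶜ}

/-- The Hamming distance of `f` from `(1,2,3)`-fork-freeness. -/
noncomputable def forkHammingDist {n : ℕ} (f : (Fin 2 → Fin n) → ℝ) : ℕ :=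
  sInf {s : ℕ | ∃ g : (Fin 2 → Fin n) → ℝ, ForkFree g ∧ {x | f x ≠ g x}.ncard = s}

/-!
Take `n = m + 2`, coordinates in `{0, …, m + 1}`, and the point `o = (m, m)`. Let `f` be `1` on
the column `x = m`, `2` on the rest of the row `y = m`, `0` on the rest of the last column and
`3` elsewhere. Once `o` is deleted, `f` has no fork: the middle point of a fork has value `1` or
`2`, which forces the two upper points onto the last column or the last row, where they are
comparable.

A fork-free `g` must however change `f` in `m` places. If `g o < 2`, then for every `k < m` the
points `o, (k, m), (k, m + 1)` form a fork unless `g` changes column `k`; if `g o ≥ 2`, the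
points `(m + 1, k), (m, k), o` form a fork unless `g` changes row `k`.
-/

open Set

section Grid

variable {n : ℕ}

theorem gridLE_iff {p q : Fin 2 → Fin n} :
    gridLE p q ↔ (p 0 : ℕ) ≤ q 0 ∧ (p 1 : ℕ) ≤ q 1 := by
  simp only [gridLE, Fin.forall_fin_two, Fin.le_def]

theorem gridLE_or_gridLE_of_coord_eq {p q : Fin 2 → Fin n}
    (h : (p 0 : ℕ) = q 0 ∨ (p 1 : ℕ) = q 1) : gridLE p q ∨ gridLE q p := by
  simp only [gridLE_iff]
  omega

theorem forkFree_const (c : ℝ) : ForkFree (fun _ : Fin 2 → Fin n ↦ c) :=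
  fun ⟨_, _, _, _, _, _, _, _, _, _, h, _⟩ ↦ h.false

theorem forkDeletionDist_le_ncard {f : (Fin 2 → Fin n) → ℝ} {S : Set (Fin 2 → Fin n)}
    (hS : ¬ ForkAppearanceOn f Sᶜ) : forkDeletionDist f ≤ S.ncard :=
  Nat.sInf_le ⟨S, rfl, hS⟩

theorem le_forkHammingDist {f : (Fin 2 → Fin n) → ℝ} {k : ℕ}
    (h : ∀ g, ForkFree g → k ≤ {x | f x ≠ g x}.ncard) : k ≤ forkHammingDist f :=
  le_csInf ⟨_, 0, forkFree_const 0, rfl⟩ fun _ ⟨g, hg, hs⟩ ↦ hs ▸ h g hg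

end Grid

theorem le_ncard_of_forall_lt_exists {α : Type*} {s : Set α} (hs : s.Finite) {φ : α → ℕ}
    {m : ℕ} (h : ∀ k < m, ∃ x ∈ s, φ x = k) : m ≤ s.ncard :=
  calc m = (Iio m).ncard := (ncard_Iio_nat m).symm
    _ ≤ (φ '' s).ncard := ncard_le_ncard (fun k hk ↦ h k hk) (hs.image φ)
    _ ≤ s.ncard := ncard_image_le hs

section Cross

variable (m : ℕ)

def crossFun (p : Fin 2 → Fin (m + 2)) : ℝ :=
  if (p 0 : ℕ) = m then 1 else if (p 1 : ℕ) = m then 2 else if m < (p 0 : ℕ) then 0 else 3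

def crossCenter : Fin 2 → Fin (m + 2) := fun _ ↦ ⟨m, by omega⟩

theorem not_forkAppearanceOn_crossFun_compl_center :
    ¬ ForkAppearanceOn (crossFun m) {crossCenter m}ᶜ := by
  rintro ⟨p₁, p₂, p₃, hp₁, -, -, ⟨h₂₁, -⟩, ⟨h₂₃, -⟩, h₁₃, h₃₁, hv₁₂, hv₂₃⟩
  have h₁ : ¬ ((p₁ 0 : ℕ) = m ∧ (p₁ 1 : ℕ) = m) := fun ⟨h0, h1⟩ ↦
    hp₁ (funext fun i ↦ Fin.ext (by fin_cases i <;> assumption))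
  have hline : (p₁ 0 : ℕ) = p₃ 0 ∨ (p₁ 1 : ℕ) = p₃ 1 := by
    rw [gridLE_iff] at h₂₁ h₂₃
    have := (p₁ 0).isLt; have := (p₁ 1).isLt; have := (p₃ 0).isLt; have := (p₃ 1).isLt
    simp only [crossFun] at hv₁₂ hv₂₃
    split_ifs at hv₁₂ hv₂₃ <;> first | linarith | omega
  rcases gridLE_or_gridLE_of_coord_eq hline with h | h
  exacts [h₁₃ h, h₃₁ h]

theorem exists_ne_on_column_of_forkFree {g : (Fin 2 → Fin (m + 2)) → ℝ} (hg : ForkFree g)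
    (ho : g (crossCenter m) < 2) {k : ℕ} (hk : k < m) :
    ∃ x, crossFun m x ≠ g x ∧ (x 0 : ℕ) = k := by
  by_contra! h
  have agree (x) (hx : (x 0 : ℕ) = k) : g x = crossFun m x :=
    of_not_not fun hne ↦ h x (Ne.symm hne) hx
  let a : Fin 2 → Fin (m + 2) := ![⟨k, by omega⟩, ⟨m, by omega⟩]
  let b : Fin 2 → Fin (m + 2) := ![⟨k, by omega⟩, ⟨m + 1, by omega⟩]
  have ha : g a = 2 := (agree a rfl).trans (by simp [crossFun, a, hk.ne])
  have hb : g b = 3 := (agree b rfl).trans (by simp [crossFun, b, hk.ne, hk.not_gt])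
  refine hg ⟨crossCenter m, a, b, trivial, trivial, trivial, ?_, ?_, ?_, ?_, ha ▸ ho, by linarith⟩
    <;> simp only [gridLT, gridLE_iff, ne_eq, funext_iff, Fin.forall_fin_two, Fin.ext_iff,
      crossCenter, a, b, Matrix.cons_val_zero, Matrix.cons_val_one, Matrix.cons_val_fin_one]
    <;> omega

theorem exists_ne_on_row_of_forkFree {g : (Fin 2 → Fin (m + 2)) → ℝ} (hg : ForkFree g)
    (ho : 2 ≤ g (crossCenter m)) {k : ℕ} (hk : k < m) :
    ∃ x, crossFun m x ≠ g x ∧ (x 1 : ℕ) = k := by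
  by_contra! h
  have agree (x) (hx : (x 1 : ℕ) = k) : g x = crossFun m x :=
    of_not_not fun hne ↦ h x (Ne.symm hne) hx
  let a : Fin 2 → Fin (m + 2) := ![⟨m, by omega⟩, ⟨k, by omega⟩]
  let b : Fin 2 → Fin (m + 2) := ![⟨m + 1, by omega⟩, ⟨k, by omega⟩]
  have ha : g a = 1 := (agree a rfl).trans (by simp [crossFun, a])
  have hb : g b = 0 := (agree b rfl).trans (by simp [crossFun, b, hk.ne])
  refine hg ⟨b, a, crossCenter m, trivial, trivial, trivial, ?_, ?_, ?_, ?_, by linarith,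
    by linarith⟩
    <;> simp only [gridLT, gridLE_iff, ne_eq, funext_iff, Fin.forall_fin_two, Fin.ext_iff,
      crossCenter, a, b, Matrix.cons_val_zero, Matrix.cons_val_one, Matrix.cons_val_fin_one]
    <;> omega

theorem le_ncard_ne_crossFun_of_forkFree {g : (Fin 2 → Fin (m + 2)) → ℝ} (hg : ForkFree g) :
    m ≤ {x | crossFun m x ≠ g x}.ncard := by
  rcases lt_or_ge (g (crossCenter m)) 2 with ho | ho
  · exact le_ncard_of_forall_lt_exists (toFinite _)
      fun k hk ↦ exists_ne_on_column_of_forkFree m hg ho hk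
  · exact le_ncard_of_forall_lt_exists (toFinite _)
      fun k hk ↦ exists_ne_on_row_of_forkFree m hg ho hk

end Cross

/-- There are `c > 0` and `n₀` such that for every `n ≥ n₀` there is a
function `f : [n]² → ℝ` whose deletion distance from `(1,2,3)`-fork-freeness is at most
`1` and whose Hamming distance from `(1,2,3)`-fork-freeness is at least `c·n`. -/
theorem stmt15 : ∃ c : ℝ, 0 < c ∧ ∃ n₀ : ℕ, ∀ n : ℕ, n₀ ≤ n →
    ∃ f : (Fin 2 → Fin n) → ℝ,
      forkDeletionDist f ≤ 1 ∧ c * (n : ℝ) ≤ (forkHammingDist f : ℝ) := by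
  refine ⟨1 / 2, by norm_num, 4, fun n hn ↦ ?_⟩
  obtain ⟨m, rfl⟩ : ∃ m, n = m + 2 := ⟨n - 2, by omega⟩
  refine ⟨crossFun m, ?_, ?_⟩
  · simpa using forkDeletionDist_le_ncard (not_forkAppearanceOn_crossFun_compl_center m)
  · have hm : m ≤ forkHammingDist (crossFun m) :=
      le_forkHammingDist fun _ hg ↦ le_ncard_ne_crossFun_of_forkFree m hg
    have h2m : (2 : ℝ) ≤ m := by exact_mod_cast (by omega : 2 ≤ m)
    have hm' : (m : ℝ) ≤ forkHammingDist (crossFun m) := by exact_mod_cast hm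
    push_cast
    linarith
end
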